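/- arXiv:2311.02838 — 5 statements merged into one kernel-verified Lean document; each statement's English description precedes it below -/
import Mathlib

section
/- Assume W = ℝ^N and that there exists an index 1 ≤ n_0 ≤ N such that every entry of the n_0-th row of U is nonzero. Then for every 1 ≤ p ≤ ∞ the set ∪_{Q ≥ 0} C_{Q,p} is dense in C(Ω) with respect to the uniform norm: for every continuous function f : Ω → ℝ and every ε > 0 there exist Q ≥ 0 and g ∈ C_{Q,p} with sup_{x ∈ Ω} |f(x) − g(x)| ≤ ε. -/
open MeasureTheory ENNReal

noncomputable section

abbrev Vec (N : ℕ) := Fin N → ℝ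

abbrev Param (N : ℕ) := Vec N × Vec N × Vec N

/-- componentwise ReLU -/
def relu {N : ℕ} (x : Vec N) : Vec N := fun i => max (x i) 0

/-- graph convolution defined via the orthogonal matrix `U` -/
def conv {N : ℕ} (U : Matrix (Fin N) (Fin N) ℝ) (b x : Vec N) : Vec N :=
  U.mulVec (U.transpose.mulVec b * U.transpose.mulVec x)

/-- The data and standing assumptions of the graph Barron space setting. -/
structure Setting (N : ℕ) where
  U : Matrix (Fin N) (Fin N) ℝ
  W : Submodule ℝ (Vec N)
  dom : Set (Vec N)
  nrm : Vec N → ℝ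
  conorm : Vec N → ℝ
  hN : 1 ≤ N
  hU : U.transpose * U = 1
  hdomc : IsCompact dom
  hdomne : dom.Nonempty
  nrm_add : ∀ x y, nrm (x + y) ≤ nrm x + nrm y
  nrm_smul : ∀ (t : ℝ) (x), nrm (t • x) = |t| * nrm x
  nrm_eq_zero : ∀ x, nrm x = 0 ↔ x = 0
  relu_nrm_le : ∀ x, nrm (relu x) ≤ nrm x
  conorm_add : ∀ b b', b ∈ W → b' ∈ W → conorm (b + b') ≤ conorm b + conorm b'
  conorm_smul : ∀ (t : ℝ) (b), b ∈ W → conorm (t • b) = |t| * conorm b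
  conorm_eq_zero : ∀ b, b ∈ W → (conorm b = 0 ↔ b = 0)
  conv_nrm_le : ∀ b ∈ W, ∀ x ∈ dom, nrm (conv U b x) ≤ conorm b

namespace Setting

variable {N : ℕ} (S : Setting N)

/-- dual norm `‖a‖_* = sup {aᵀx : ‖x‖ ≤ 1}` -/
def dual (a : Vec N) : ℝ :=
  sSup {t : ℝ | ∃ x : Vec N, S.nrm x ≤ 1 ∧ t = ∑ i, a i * x i}

/-- the neuron `aᵀ σ(b*x + c)` -/
def neuron (x : Vec N) (p : Param N) : ℝ :=
  ∑ i, p.1 i * relu (conv S.U p.2.1 x + p.2.2) i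

/-- `P_f`: probability measures on `ℝ^N × W × ℝ^N` representing `f` on `Ω`. -/
def reps (f : Vec N → ℝ) : Set (Measure (Param N)) :=
  {ρ | IsProbabilityMeasure ρ ∧ ρ {p : Param N | p.2.1 ∉ S.W} = 0 ∧
    ∀ x ∈ S.dom, Integrable (S.neuron x) ρ ∧ f x = ∫ p, S.neuron x p ∂ρ}

/-- the weight `‖a‖_* (‖b‖_co + ‖c‖)` -/
def weight (p : Param N) : ℝ := S.dual p.1 * (S.conorm p.2.1 + S.nrm p.2.2)

def cost (ρ : Measure (Param N)) : ℝ≥0∞ :=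
  ∫⁻ p, ENNReal.ofReal (S.weight p) ∂ρ

/-- the Barron norm `‖f‖_{B_1} ∈ [0,∞]` -/
def barron (f : Vec N → ℝ) : ℝ≥0∞ :=
  ⨅ ρ ∈ S.reps f, S.cost ρ

/-- membership in the Barron space `B = B_1` -/
def memB (f : Vec N → ℝ) : Prop :=
  (S.reps f).Nonempty ∧ S.barron f < ⊤

/-- `(a,b,c)` lies in `S × T` -/
def onST (p : Param N) : Prop :=
  S.dual p.1 = 1 ∧ p.2.1 ∈ S.W ∧ S.conorm p.2.1 + S.nrm p.2.2 = 1

/-- output of the shallow GCNN with parameters `θ` -/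
def netOut {M : ℕ} (θ : Fin M → Param N) (x : Vec N) : ℝ :=
  (M : ℝ)⁻¹ * ∑ m, S.neuron x (θ m)

/-- the `p`-path norm, `1 ≤ p ≤ ∞` -/
def pathNorm {M : ℕ} (p : ℝ≥0∞) (θ : Fin M → Param N) : ℝ :=
  if p = ⊤ then ⨆ m, S.weight (θ m)
  else ((M : ℝ)⁻¹ * ∑ m, S.weight (θ m) ^ p.toReal) ^ (p.toReal)⁻¹

/-- the class `C_{Q,p}` of GCNN outputs with `p`-path norm at most `Q` -/
def CQp (Q : ℝ) (p : ℝ≥0∞) : Set (Vec N → ℝ) :=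
  {g | ∃ M : ℕ, 1 ≤ M ∧ ∃ θ : Fin M → Param N,
    (∀ m, (θ m).2.1 ∈ S.W) ∧ S.pathNorm p θ ≤ Q ∧ ∀ x ∈ S.dom, g x = S.netOut θ x}

end Setting


-- ===================== auxiliary development =====================

open Real Finset in

lemma relu1d (φ : ℝ → ℝ) (hφ : Continuous φ) (R : ℝ) (hR : 0 < R) (ε : ℝ) (hε : 0 < ε) :
    ∃ h ∈ Submodule.span ℝ {g : ℝ → ℝ | ∃ lam t : ℝ, g = fun s => max (lam * s + t) 0},
      ∀ s ∈ Set.Icc (-R) R, |φ s - h s| ≤ ε := by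
  obtain ⟨δ₀, hδ₀pos, hδ₀⟩ := (Metric.uniformContinuousOn_iff).1
    ((isCompact_Icc (a := -R) (b := R)).uniformContinuousOn_of_continuous hφ.continuousOn)
    (ε/2) (by positivity)
  set n : ℕ := ⌈2*R/δ₀⌉₊ + 1 with hn
  have hnpos : (0:ℝ) < n := by positivity
  set δ : ℝ := 2*R/n with hδ
  have hδpos : 0 < δ := by positivity
  have hδlt : δ < δ₀ := by
    have h1 : 2*R/δ₀ < n := by
      have h2 := Nat.le_ceil (2*R/δ₀)
      have h3 : ((⌈2*R/δ₀⌉₊ : ℝ)) < n := by push_cast [hn]; linarith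
      linarith
    rw [hδ, div_lt_iff₀ hnpos]
    have h4 : (2*R/δ₀) * δ₀ < n * δ₀ := by nlinarith
    have h5 : (2*R/δ₀) * δ₀ = 2*R := by field_simp
    nlinarith
  set c : ℕ → ℝ := fun k => -R + k * δ with hc
  have hcmono : ∀ {k l : ℕ}, k ≤ l → c k ≤ c l := by
    intro k l hkl
    simp only [hc]
    have : (k:ℝ) ≤ l := by exact_mod_cast hkl
    nlinarith
  have hcn : c n = R := by
    simp only [hc, hδ]; field_simp; ring
  set m : ℕ → ℝ := fun k => (φ (c (k+1)) - φ (c k)) / δ with hm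
  set h : ℝ → ℝ := (fun _ => φ (c 0)) + ∑ k ∈ range n,
      m k • ((fun s => max (s - c k) 0) - (fun s => max (s - c (k+1)) 0)) with hh
  have happ : ∀ s, h s = φ (c 0) + ∑ k ∈ range n,
      m k * (max (s - c k) 0 - max (s - c (k+1)) 0) := by
    intro s
    simp [hh, Finset.sum_apply]
  refine ⟨h, ?_, ?_⟩
  · apply Submodule.add_mem
    · have : (fun _ : ℝ => φ (c 0)) = φ (c 0) • (fun s => max ((0:ℝ) * s + 1) 0) := by
        funext s; simp
      rw [this]
      exact Submodule.smul_mem _ _ (Submodule.subset_span ⟨0, 1, rfl⟩)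
    · apply Submodule.sum_mem
      intro k _
      apply Submodule.smul_mem
      apply Submodule.sub_mem
      · have : (fun s : ℝ => max (s - c k) 0) = fun s => max (1 * s + (-(c k))) 0 := by
          funext s; ring_nf
        exact this ▸ Submodule.subset_span ⟨1, -(c k), rfl⟩
      · have : (fun s : ℝ => max (s - c (k+1)) 0) = fun s => max (1 * s + (-(c (k+1)))) 0 := by
          funext s; ring_nf
        exact this ▸ Submodule.subset_span ⟨1, -(c (k+1)), rfl⟩
  · intro s hs
    obtain ⟨hs1, hs2⟩ := hs
    -- find j
    set j : ℕ := min (⌊(s + R)/δ⌋₊) (n-1) with hj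
    have hjn : j < n := lt_of_le_of_lt (min_le_right _ _) (by omega)
    have hj1n : j + 1 ≤ n := hjn
    have hcj : c j ≤ s := by
      have h1 : (j:ℝ) ≤ (s+R)/δ := by
        have : (j:ℝ) ≤ (⌊(s + R)/δ⌋₊ : ℝ) := by exact_mod_cast min_le_left _ _
        exact this.trans (Nat.floor_le (div_nonneg (by linarith) hδpos.le))
      rw [le_div_iff₀ hδpos] at h1
      simp only [hc]; linarith
    have hscj : s ≤ c (j+1) := by
      rcases le_or_gt (⌊(s + R)/δ⌋₊) (n-1) with hle | hlt
      · have hjf : j = ⌊(s + R)/δ⌋₊ := min_eq_left hle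
        have h2 : (s+R)/δ < (j:ℝ) + 1 := by
          rw [hjf]; push_cast; exact Nat.lt_floor_add_one _
        rw [div_lt_iff₀ hδpos] at h2
        simp only [hc]; push_cast; nlinarith
      · have hjf : j = n - 1 := min_eq_right hlt.le
        have : j + 1 = n := by omega
        rw [this, hcn]; exact hs2
    have hcjR : c j ∈ Set.Icc (-R) R := by
      constructor
      · simp only [hc]
        nlinarith [mul_nonneg (Nat.cast_nonneg j) hδpos.le]
      · exact hcj.trans hs2
    have hcj1R : c (j+1) ∈ Set.Icc (-R) R := by
      constructor
      · exact hs1.trans hscj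
      · rw [← hcn]; exact hcmono hj1n
    have hsI : s ∈ Set.Icc (-R) R := ⟨hs1, hs2⟩
    -- key sum evaluation
    have key : ∑ k ∈ range n, m k * (max (s - c k) 0 - max (s - c (k+1)) 0)
        = (φ (c j) - φ (c 0)) + m j * (s - c j) := by
      rw [← Finset.sum_range_add_sum_Ico _ hj1n]
      have hIco : ∑ k ∈ Ico (j+1) n, m k * (max (s - c k) 0 - max (s - c (k+1)) 0) = 0 := by
        apply Finset.sum_eq_zero
        intro k hk
        have hk1 : j + 1 ≤ k := (Finset.mem_Ico.1 hk).1
        have h1 : s - c k ≤ 0 := by linarith [hscj.trans (hcmono hk1)]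
        have h2 : s - c (k+1) ≤ 0 := by linarith [hscj.trans (hcmono (by omega : j+1 ≤ k+1))]
        rw [max_eq_right h1, max_eq_right h2]; ring
      rw [hIco, add_zero, Finset.sum_range_succ]
      have hjterm : m j * (max (s - c j) 0 - max (s - c (j+1)) 0) = m j * (s - c j) := by
        rw [max_eq_left (by linarith), max_eq_right (by linarith)]; ring
      have hsum : ∑ k ∈ range j, m k * (max (s - c k) 0 - max (s - c (k+1)) 0)
          = φ (c j) - φ (c 0) := by
        rw [← Finset.sum_range_sub (fun k => φ (c k)) j]
        apply Finset.sum_congr rfl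
        intro k hk
        have hkj : k + 1 ≤ j := Finset.mem_range.1 hk
        have h1 : 0 ≤ s - c k := by linarith [hcj, hcmono (by omega : k ≤ j)]
        have h2 : 0 ≤ s - c (k+1) := by linarith [hcj, hcmono hkj]
        rw [max_eq_left h1, max_eq_left h2]
        have hck : c (k+1) - c k = δ := by simp only [hc]; push_cast; ring
        rw [show (s - c k) - (s - c (k+1)) = δ by linarith]
        simp only [hm]
        exact div_mul_cancel₀ _ hδpos.ne'
      rw [hjterm, hsum]
    rw [happ, key]
    have hb1 : |φ s - φ (c j)| ≤ ε/2 := by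
      have := hδ₀ s hsI (c j) hcjR (by
        rw [Real.dist_eq]
        have : |s - c j| = s - c j := abs_of_nonneg (by linarith)
        rw [this]
        have hd : c (j+1) - c j = δ := by simp only [hc]; push_cast; ring
        linarith [hscj, hδlt])
      rw [Real.dist_eq] at this
      linarith
    have hb2 : |m j * (s - c j)| ≤ ε/2 := by
      have hd : c (j+1) - c j = δ := by simp only [hc]; push_cast; ring
      have hsd : |s - c j| ≤ δ := by
        rw [abs_of_nonneg (by linarith)]; linarith
      have hφd : |φ (c (j+1)) - φ (c j)| ≤ ε/2 := by
        have := hδ₀ (c (j+1)) hcj1R (c j) hcjR (by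
          rw [Real.dist_eq, hd, abs_of_nonneg hδpos.le]; exact hδlt)
        rw [Real.dist_eq] at this
        linarith
      calc |m j * (s - c j)| = |φ (c (j+1)) - φ (c j)| / δ * |s - c j| := by
            rw [abs_mul]; simp only [hm]; rw [abs_div, abs_of_nonneg hδpos.le]
        _ ≤ |φ (c (j+1)) - φ (c j)| / δ * δ := by
            apply mul_le_mul_of_nonneg_left hsd (by positivity)
        _ = |φ (c (j+1)) - φ (c j)| := by field_simp
        _ ≤ ε/2 := hφd
    calc |φ s - (φ (c 0) + (φ (c j) - φ (c 0) + m j * (s - c j)))|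
        = |(φ s - φ (c j)) - m j * (s - c j)| := by ring_nf
      _ ≤ |φ s - φ (c j)| + |m j * (s - c j)| := abs_sub _ _
      _ ≤ ε/2 + ε/2 := add_le_add hb1 hb2
      _ = ε := by ring


def bvec {N : ℕ} (U : Matrix (Fin N) (Fin N) ℝ) (n₀ : Fin N) (w : Vec N) : Vec N :=
  U.mulVec (fun n => (U.transpose.mulVec w) n / U n₀ n)

lemma conv_bvec {N : ℕ} (U : Matrix (Fin N) (Fin N) ℝ) (hU : U.transpose * U = 1)
    (n₀ : Fin N) (hrow : ∀ n, U n₀ n ≠ 0) (w x : Vec N) :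
    conv U (bvec U n₀ w) x n₀ = ∑ i, w i * x i := by
  have hUUT : U * U.transpose = 1 := mul_eq_one_comm.1 hU
  have hb : U.transpose.mulVec (bvec U n₀ w) = fun n => (U.transpose.mulVec w) n / U n₀ n := by
    rw [bvec, Matrix.mulVec_mulVec, hU, Matrix.one_mulVec]
  have step1 : conv U (bvec U n₀ w) x n₀
      = ∑ n, (U.transpose.mulVec w) n * (U.transpose.mulVec x) n := by
    rw [conv, hb]
    simp only [Matrix.mulVec, dotProduct, Pi.mul_apply]
    apply Finset.sum_congr rfl
    intro n _
    calc U n₀ n * ((U.transpose.mulVec w) n / U n₀ n * (U.transpose.mulVec x) n)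
        = (U n₀ n / U n₀ n) * ((U.transpose.mulVec w) n * (U.transpose.mulVec x) n) := by ring
      _ = (U.transpose.mulVec w) n * (U.transpose.mulVec x) n := by
          rw [div_self (hrow n), one_mul]
  rw [step1]
  have : ∑ n, (U.transpose.mulVec w) n * (U.transpose.mulVec x) n
      = dotProduct (U.transpose.mulVec w) (U.transpose.mulVec x) := rfl
  rw [this, Matrix.dotProduct_mulVec, Matrix.vecMul_transpose, Matrix.mulVec_mulVec, hUUT,
    Matrix.one_mulVec]
  rfl


namespace UAaux

open Real Finset

section

variable {N : ℕ} {D : Set (Vec N)}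

def dot (w x : Vec N) : ℝ := ∑ i, w i * x i

lemma dot_cont (w : Vec N) (t : ℝ) : Continuous (fun x : D => dot w (x : Vec N) + t) :=
  (continuous_finset_sum _ fun i _ =>
    continuous_const.mul ((continuous_apply i).comp continuous_subtype_val)).add continuous_const

def cosF (D : Set (Vec N)) (w : Vec N) (t : ℝ) : C(D, ℝ) :=
  ⟨fun x => Real.cos (dot w (x : Vec N) + t), Real.continuous_cos.comp (dot_cont w t)⟩

def reluF (D : Set (Vec N)) (w : Vec N) (t : ℝ) : C(D, ℝ) :=
  ⟨fun x => max (dot w (x : Vec N) + t) 0, (dot_cont w t).max continuous_const⟩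

def VC (D : Set (Vec N)) : Submodule ℝ C(D, ℝ) :=
  Submodule.span ℝ (Set.range fun p : Vec N × ℝ => cosF D p.1 p.2)

def VR (D : Set (Vec N)) : Submodule ℝ C(D, ℝ) :=
  Submodule.span ℝ (Set.range fun p : Vec N × ℝ => reluF D p.1 p.2)

lemma dot_add (w w' x : Vec N) : dot (w + w') x = dot w x + dot w' x := by
  simp [dot, add_mul, Finset.sum_add_distrib]

lemma dot_sub (w w' x : Vec N) : dot (w - w') x = dot w x - dot w' x := by
  simp [dot, sub_mul, Finset.sum_sub_distrib]

lemma dot_smul (c : ℝ) (w x : Vec N) : dot (c • w) x = c * dot w x := by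
  simp [dot, Finset.mul_sum, mul_assoc]

lemma cos_mul_cos (w w' : Vec N) (t t' : ℝ) :
    cosF D w t * cosF D w' t' =
      (1/2 : ℝ) • cosF D (w + w') (t + t') + (1/2 : ℝ) • cosF D (w - w') (t - t') := by
  have key : ∀ a b : ℝ, Real.cos a * Real.cos b
      = 1/2 * Real.cos (a+b) + 1/2 * Real.cos (a-b) := by
    intro a b; rw [Real.cos_add, Real.cos_sub]; ring
  ext x
  simp only [ContinuousMap.mul_apply, ContinuousMap.add_apply, ContinuousMap.smul_apply,
    cosF, ContinuousMap.coe_mk, smul_eq_mul, dot_add, dot_sub]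
  rw [show dot w (x : Vec N) + dot w' (x : Vec N) + (t + t')
      = (dot w (x : Vec N) + t) + (dot w' (x : Vec N) + t') by ring,
    show dot w (x : Vec N) - dot w' (x : Vec N) + (t - t')
      = (dot w (x : Vec N) + t) - (dot w' (x : Vec N) + t') by ring,
    key]

lemma one_mem_VC : (1 : C(D, ℝ)) ∈ VC D := by
  have : (1 : C(D, ℝ)) = cosF D 0 0 := by
    ext x
    simp [cosF, dot]
  rw [this]
  exact Submodule.subset_span ⟨(0, 0), rfl⟩

lemma mul_mem_VC : ∀ f g : C(D, ℝ), f ∈ VC D → g ∈ VC D → f * g ∈ VC D := by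
  have hgen : ∀ (w : Vec N) (t : ℝ) (g : C(D, ℝ)), g ∈ VC D → cosF D w t * g ∈ VC D := by
    intro w t g hg
    induction hg using Submodule.span_induction with
    | mem g hgmem =>
      obtain ⟨⟨w', t'⟩, rfl⟩ := hgmem
      rw [cos_mul_cos]
      exact Submodule.add_mem _
        (Submodule.smul_mem _ _ (Submodule.subset_span ⟨(w + w', t + t'), rfl⟩))
        (Submodule.smul_mem _ _ (Submodule.subset_span ⟨(w - w', t - t'), rfl⟩))
    | zero => rw [mul_zero]; exact Submodule.zero_mem _
    | add g₁ g₂ h₁ h₂ ih₁ ih₂ => rw [mul_add]; exact Submodule.add_mem _ ih₁ ih₂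
    | smul c g hgm ih => rw [mul_smul_comm]; exact Submodule.smul_mem _ _ ih
  intro f g hf hg
  induction hf using Submodule.span_induction with
  | mem f hfmem =>
    obtain ⟨⟨w, t⟩, rfl⟩ := hfmem
    exact hgen w t g hg
  | zero => rw [zero_mul]; exact Submodule.zero_mem _
  | add f₁ f₂ h₁ h₂ ih₁ ih₂ => rw [add_mul]; exact Submodule.add_mem _ ih₁ ih₂
  | smul c f hfm ih => rw [smul_mul_assoc]; exact Submodule.smul_mem _ _ ih

/-- the cosine subalgebra -/
def AC (D : Set (Vec N)) : Subalgebra ℝ C(D, ℝ) :=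
  (VC D).toSubalgebra one_mem_VC mul_mem_VC

lemma AC_separates : (AC (N := N) D).SeparatesPoints := by
  intro x y hxy
  have hxy' : (x : Vec N) ≠ (y : Vec N) := fun h => hxy (Subtype.ext h)
  obtain ⟨i, hi⟩ := Function.ne_iff.1 hxy'
  set a := (x : Vec N) i with ha
  set b := (y : Vec N) i with hb
  set lam : ℝ := (π/2) / (max |a| |b| + 1) with hlam
  have hden : (0:ℝ) < max |a| |b| + 1 := by positivity
  have hlampos : 0 < lam := by
    apply div_pos Real.pi_div_two_pos hden
  have hbound : ∀ u : ℝ, |u| ≤ max |a| |b| → lam * u ∈ Set.Icc (-(π/2)) (π/2) := by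
    intro u hu
    have h1 : |lam * u| ≤ π/2 := by
      rw [abs_mul, abs_of_pos hlampos, hlam]
      rw [div_mul_eq_mul_div, div_le_iff₀ hden]
      nlinarith [Real.pi_div_two_pos]
    constructor <;> [linarith [neg_abs_le (lam * u)]; linarith [le_abs_self (lam * u)]]
  set w : Vec N := lam • (fun j => if j = i then (1:ℝ) else 0) with hw
  have hdotx : ∀ z : Vec N, dot w z = lam * z i := by
    intro z
    simp only [hw, dot, Pi.smul_apply, smul_eq_mul]
    rw [Finset.sum_eq_single i]
    · simp
    · intro j _ hj; simp [hj]
    · intro h; simp at h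
  refine ⟨_, ⟨cosF D w (-(π/2)), Submodule.subset_span ⟨(w, -(π/2)), rfl⟩, rfl⟩, ?_⟩
  simp only [cosF, ContinuousMap.coe_mk, hdotx]
  rw [show lam * a + -(π/2) = -(π/2 - lam * a) by ring,
    show lam * b + -(π/2) = -(π/2 - lam * b) by ring, Real.cos_neg, Real.cos_neg,
    Real.cos_pi_div_two_sub, Real.cos_pi_div_two_sub]
  intro heq
  have hinj := Real.strictMonoOn_sin.injOn
  have h2 := hbound b (le_max_right _ _)
  have ha' : lam * a ∈ Set.Icc (-(π/2)) (π/2) := hbound a (le_max_left _ _)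
  have := hinj ha' h2 heq
  exact hi (mul_left_cancel₀ hlampos.ne' this)



open Real Finset

lemma cosF_mem_closure {N : ℕ} {D : Set (Vec N)} [CompactSpace D] (hD : IsCompact D)
    (w : Vec N) (t : ℝ) :
    cosF D w t ∈ closure (VR D : Set C(D, ℝ)) := by
  obtain ⟨C, hC⟩ := hD.exists_bound_of_continuousOn
    (f := fun x : Vec N => dot w x) (by
      apply Continuous.continuousOn
      exact continuous_finset_sum _ fun i _ => continuous_const.mul (continuous_apply i))
  set R : ℝ := |C| + 1 with hR
  have hRpos : 0 < R := by positivity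
  rw [Metric.mem_closure_iff]
  intro ε hε
  obtain ⟨h, hmem, hbound⟩ := relu1d (fun s => Real.cos (s + t))
    (Real.continuous_cos.comp (continuous_id.add continuous_const)) R hRpos (ε/2) (half_pos hε)
  -- transport h to a continuous map in VR D
  have htrans : ∀ h₀ : ℝ → ℝ,
      h₀ ∈ Submodule.span ℝ {g : ℝ → ℝ | ∃ lam t : ℝ, g = fun s => max (lam * s + t) 0} →
      ∃ H : C(D, ℝ), H ∈ VR D ∧ ∀ x : D, H x = h₀ (dot w (x : Vec N)) := by
    intro h₀ hmem₀
    induction hmem₀ using Submodule.span_induction with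
    | mem g hgmem =>
      obtain ⟨lam, t', rfl⟩ := hgmem
      refine ⟨reluF D (lam • w) t', Submodule.subset_span ⟨(lam • w, t'), rfl⟩, ?_⟩
      intro x
      simp [reluF, dot_smul]
    | zero => exact ⟨0, Submodule.zero_mem _, by simp⟩
    | add g₁ g₂ h₁ h₂ ih₁ ih₂ =>
      obtain ⟨H₁, hm₁, he₁⟩ := ih₁
      obtain ⟨H₂, hm₂, he₂⟩ := ih₂
      exact ⟨H₁ + H₂, Submodule.add_mem _ hm₁ hm₂, fun x => by
        simp [he₁ x, he₂ x]⟩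
    | smul c g hgm ih =>
      obtain ⟨H, hm, he⟩ := ih
      exact ⟨c • H, Submodule.smul_mem _ _ hm, fun x => by simp [he x]⟩
  obtain ⟨H, hm, he⟩ := htrans h hmem
  refine ⟨H, hm, lt_of_le_of_lt ?_ (half_lt_self hε)⟩
  rw [ContinuousMap.dist_le (half_pos hε).le]
  intro x
  rw [he x]
  have hxI : dot w (x : Vec N) ∈ Set.Icc (-R) R := by
    have := hC (x : Vec N) x.2
    rw [Real.norm_eq_abs] at this
    constructor
    · linarith [neg_abs_le (dot w (x : Vec N)), le_abs_self C]
    · linarith [le_abs_self (dot w (x : Vec N)), le_abs_self C]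
  have := hbound _ hxI
  rw [Real.dist_eq]
  simpa [cosF] using this

lemma final_density {N : ℕ} {D : Set (Vec N)} [CompactSpace D] (hD : IsCompact D)
    (F : C(D, ℝ)) (ε : ℝ) (hε : 0 < ε) :
    ∃ H ∈ VR D, dist F H < ε := by
  have hSW : (AC D).topologicalClosure = ⊤ :=
    ContinuousMap.subalgebra_topologicalClosure_eq_top_of_separatesPoints _ AC_separates
  have hVC_le : (VC D : Set C(D, ℝ)) ⊆ ((VR D).topologicalClosure : Set C(D, ℝ)) := by
    have : VC D ≤ (VR D).topologicalClosure := by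
      rw [VC, Submodule.span_le]
      rintro g ⟨⟨w, t⟩, rfl⟩
      rw [SetLike.mem_coe, ← SetLike.mem_coe, Submodule.topologicalClosure_coe]
      exact cosF_mem_closure hD w t
    exact this
  have hF : F ∈ closure ((VC D) : Set C(D, ℝ)) := by
    have h1 : F ∈ (AC D).topologicalClosure := by rw [hSW]; trivial
    have h2 : ((AC D).topologicalClosure : Set C(D, ℝ)) = closure (AC D : Set C(D, ℝ)) :=
      Subalgebra.topologicalClosure_coe _
    have h3 : (AC D : Set C(D, ℝ)) = (VC D : Set C(D, ℝ)) := rfl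
    have h4 : F ∈ ((AC D).topologicalClosure : Set C(D, ℝ)) := h1
    rw [h2, h3] at h4
    exact h4
  have hF2 : F ∈ closure ((VR D) : Set C(D, ℝ)) := by
    have := closure_minimal hVC_le ((VR D).isClosed_topologicalClosure) hF
    rw [Submodule.topologicalClosure_coe] at this
    exact this
  rw [Metric.mem_closure_iff] at hF2
  obtain ⟨H, hm, hd⟩ := hF2 ε hε
  exact ⟨H, hm, hd⟩

end

end UAaux

/-- a parameter triple tailored to produce `α * max (w ⬝ x + t) 0` -/
def mkParam {N : ℕ} (U : Matrix (Fin N) (Fin N) ℝ) (n₀ : Fin N) (α : ℝ) (w : Vec N)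
    (t : ℝ) : Param N :=
  (fun i => if i = n₀ then α else 0, bvec U n₀ w, fun _ => t)

lemma neuron_mkParam {N : ℕ} (S : Setting N) (n₀ : Fin N) (hrow : ∀ n, S.U n₀ n ≠ 0)
    (α : ℝ) (w : Vec N) (t : ℝ) (x : Vec N) :
    S.neuron x (mkParam S.U n₀ α w t) = α * max (UAaux.dot w x + t) 0 := by
  unfold Setting.neuron mkParam
  rw [Finset.sum_eq_single n₀]
  · simp only [if_pos rfl]
    congr 1
    unfold relu
    rw [Pi.add_apply, conv_bvec S.U S.hU n₀ hrow w x]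
    rfl
  · intro i _ hi
    simp [hi]
  · intro h
    exact absurd (Finset.mem_univ n₀) h

/-- universal approximation: if `W = ℝ^N` and some row of `U` has all
entries nonzero, then `∪_{Q ≥ 0} C_{Q,p}` is dense in `C(Ω)`. -/
theorem universal_approximation {N : ℕ} (S : Setting N) (hW : S.W = ⊤)
    (n₀ : Fin N) (hrow : ∀ n, S.U n₀ n ≠ 0) (p : ℝ≥0∞) (hp : 1 ≤ p)
    (f : Vec N → ℝ) (hf : ContinuousOn f S.dom) (ε : ℝ) (hε : 0 < ε) :
    ∃ Q : ℝ, 0 ≤ Q ∧ ∃ g ∈ S.CQp Q p, ∀ x ∈ S.dom, |f x - g x| ≤ ε := by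
  classical
  haveI : CompactSpace S.dom := isCompact_iff_compactSpace.mp S.hdomc
  have hfc : Continuous (S.dom.restrict f) := hf.restrict
  set F : C(S.dom, ℝ) := ⟨S.dom.restrict f, hfc⟩ with hF
  obtain ⟨H, hH, hdist⟩ := UAaux.final_density S.hdomc F ε hε
  rw [UAaux.VR] at hH
  obtain ⟨n, coef, gens, hsum⟩ := Submodule.mem_span_set'.1 hH
  choose wt hwt using fun i : Fin n => (gens i).2
  set θ : Fin (n+1) → Param N :=
    Fin.snoc (fun i => mkParam S.U n₀ (((n:ℝ)+1) * coef i) (wt i).1 (wt i).2)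
      (mkParam S.U n₀ 0 0 0) with hθ
  have hnet : ∀ x (hx : x ∈ S.dom), S.netOut θ x = H ⟨x, hx⟩ := by
    intro x hx
    rw [← hsum]
    unfold Setting.netOut
    rw [Fin.sum_univ_castSucc]
    simp only [hθ, Fin.snoc_castSucc, Fin.snoc_last,
      neuron_mkParam S n₀ hrow]
    have hHval : (∑ i : Fin n, coef i • ((gens i : C(S.dom, ℝ)))) ⟨x, hx⟩
        = ∑ i : Fin n, coef i * max (UAaux.dot (wt i).1 x + (wt i).2) 0 := by
      rw [ContinuousMap.coe_sum, Finset.sum_apply]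
      apply Finset.sum_congr rfl
      intro i _
      rw [← hwt i]
      simp [UAaux.reluF]
    rw [hHval]
    have hn1 : ((n:ℝ) + 1) ≠ 0 := by positivity
    rw [zero_mul, add_zero, Finset.mul_sum]
    apply Finset.sum_congr rfl
    intro i _
    have hc : ((n+1 : ℕ) : ℝ) = (n:ℝ)+1 := by push_cast; ring
    rw [hc]
    field_simp
  refine ⟨max (S.pathNorm p θ) 0, le_max_right _ _, S.netOut θ,
    ⟨n+1, by omega, θ, fun m => by rw [hW]; trivial, le_max_left _ _,
      fun x hx => rfl⟩, ?_⟩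
  intro x hx
  have h1 : |f x - S.netOut θ x| = dist (F ⟨x, hx⟩) (H ⟨x, hx⟩) := by
    rw [hnet x hx, Real.dist_eq]
    rfl
  rw [h1]
  exact (ContinuousMap.dist_apply_le_dist _).trans hdist.le
end
end

section
/- Assume W = ℝ^N and that there exists an index 1 ≤ n_0 ≤ N such that every entry of the n_0-th row of U is nonzero. Then the Barron space B is dense in C(Ω) with respect to the uniform norm: for every continuous function f : Ω → ℝ and every ε > 0 there exists g ∈ B with sup_{x ∈ Ω} |f(x) − g(x)| ≤ ε. -/
open MeasureTheory ENNReal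

noncomputable section

namespace BarronDense

open Matrix in
def relu1 (s : ℝ) : ℝ := max s 0

lemma hat_eq (c h s : ℝ) (hh : 0 ≤ h) :
    relu1 (s - c + h) - 2 * relu1 (s - c) + relu1 (s - c - h) = max (h - |s - c|) 0 := by
  unfold relu1
  rcases abs_cases (s - c) with ⟨ha, hb⟩ | ⟨ha, hb⟩ <;> rw [ha] <;>
    simp only [max_def] <;> split_ifs <;> linarith

lemma pl_approx (φ : ℝ → ℝ) (hφ : Continuous φ) (A B ε : ℝ) (hε : 0 < ε) :
    ∃ (m : ℕ) (h : ℝ) (cf node : ℕ → ℝ), 0 < h ∧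
      ∀ s ∈ Set.Icc A B,
        |φ s - ∑ j ∈ Finset.range m, cf j *
          (relu1 (s - node j + h) - 2 * relu1 (s - node j) + relu1 (s - node j - h))| ≤ ε := by
  rcases lt_or_ge B A with hBA | hAB
  · exact ⟨0, 1, 0, 0, one_pos, fun s hs => absurd (hs.1.trans hs.2) (not_le.mpr hBA)⟩
  have huc : UniformContinuousOn φ (Set.Icc (A-1) (B+1)) :=
    isCompact_Icc.uniformContinuousOn_of_continuous hφ.continuousOn
  rw [Metric.uniformContinuousOn_iff] at huc
  obtain ⟨δ, hδ, hδ'⟩ := huc ε hε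
  set h : ℝ := min δ 1 / 2 with hhdef
  have hh0 : 0 < h := by positivity
  have hhδ : h < δ := by
    have h1 : min δ 1 ≤ δ := min_le_left _ _
    have : h ≤ δ/2 := by rw [hhdef]; linarith
    linarith
  have hh1 : h ≤ 1/2 := by
    have h1 : min δ 1 ≤ 1 := min_le_right _ _
    rw [hhdef]; linarith
  set n : ℕ := ⌈(B - A)/h⌉₊ + 1 with hndef
  have hceil : (B-A)/h ≤ (⌈(B-A)/h⌉₊ : ℝ) := Nat.le_ceil _
  have hnh : B - A ≤ n * h := by
    have h2 : (B-A)/h * h ≤ (⌈(B-A)/h⌉₊ : ℝ) * h := by nlinarith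
    rw [div_mul_cancel₀ _ (ne_of_gt hh0)] at h2
    have h3 : ((⌈(B-A)/h⌉₊ : ℝ)) * h ≤ (n : ℝ) * h := by
      have : ((⌈(B-A)/h⌉₊ : ℝ)) ≤ (n : ℝ) := by rw [hndef]; push_cast; linarith
      nlinarith
    linarith
  have hnh2 : (n:ℝ) * h ≤ B - A + 2*h := by
    have h2 : (⌈(B-A)/h⌉₊ : ℝ) < (B-A)/h + 1 := Nat.ceil_lt_add_one (div_nonneg (by linarith) hh0.le)
    have h3 : (n : ℝ) = (⌈(B-A)/h⌉₊ : ℝ) + 1 := by rw [hndef]; norm_cast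
    have h4 : (n : ℝ) < (B-A)/h + 2 := by rw [h3]; linarith
    have h5 : (n:ℝ) * h ≤ ((B-A)/h + 2) * h := by nlinarith
    have h6 : ((B-A)/h + 2) * h = B - A + 2*h := by field_simp
    linarith
  clear hhdef hndef hceil
  clear_value h n
  refine ⟨n + 1, h, fun j => φ (A + j*h) / h, fun j => A + j*h, hh0, ?_⟩
  intro s hs
  obtain ⟨hsA, hsB⟩ := hs
  set hatf : ℕ → ℝ := fun j =>
    relu1 (s - (A + j*h) + h) - 2 * relu1 (s - (A + j*h)) + relu1 (s - (A + j*h) - h) with hatdef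
  have hat_max : ∀ j : ℕ, hatf j = max (h - |s - (A + j*h)|) 0 := fun j => hat_eq _ _ _ hh0.le
  have hat_nn : ∀ j : ℕ, 0 ≤ hatf j := fun j => (hat_max j) ▸ le_max_right _ _
  set v : ℕ → ℝ := fun j => relu1 (s - A - j*h + h) - relu1 (s - A - j*h) with vdef
  have key : ∀ j : ℕ, hatf j = v j - v (j+1) := by
    intro j
    simp only [hatdef, vdef]
    push_cast
    rw [show s - A - ((j:ℝ)+1)*h + h = s - A - j*h by ring,
      show s - A - ((j:ℝ)+1)*h = s - (A + j*h) - h by ring,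
      show s - (A + (j:ℝ)*h) = s - A - (j:ℝ)*h by ring]
    ring
  have hsum : ∑ j ∈ Finset.range (n+1), hatf j = h := by
    have : ∑ j ∈ Finset.range (n+1), (v j - v (j+1)) = v 0 - v (n+1) :=
      Finset.sum_range_sub' v (n+1)
    calc ∑ j ∈ Finset.range (n+1), hatf j = ∑ j ∈ Finset.range (n+1), (v j - v (j+1)) := by
          exact Finset.sum_congr rfl fun j _ => key j
      _ = v 0 - v (n+1) := this
      _ = h := by
          simp only [vdef]
          push_cast
          rw [show s - A - (0:ℝ)*h + h = s - A + h by ring, show s - A - (0:ℝ)*h = s - A by ring]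
          have e1 : relu1 (s - A + h) = s - A + h := max_eq_left (by linarith)
          have e2 : relu1 (s - A) = s - A := max_eq_left (by linarith)
          have e3 : relu1 (s - A - ((n:ℝ)+1)*h + h) = 0 := max_eq_right (by nlinarith)
          have e4 : relu1 (s - A - ((n:ℝ)+1)*h) = 0 := max_eq_right (by nlinarith)
          rw [e1, e2, e3, e4]; ring
  have hterm : ∀ j ∈ Finset.range (n+1),
      |(φ s - φ (A + j*h))/h * hatf j| ≤ ε/h * hatf j := by
    intro j hj
    rcases eq_or_lt_of_le (hat_nn j) with h0 | h0
    · rw [← h0]; simp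
    · have hlt : |s - (A + j*h)| < h := by
        have := hat_max j
        rw [← this] at *
        by_contra hc
        push_neg at hc
        have : hatf j = 0 := by rw [hat_max j]; exact max_eq_right (by linarith)
        linarith
      have hjn : (j:ℝ) ≤ n := by
        have : j ≤ n := Nat.lt_succ_iff.mp (Finset.mem_range.mp hj)
        exact_mod_cast this
      have hnode1 : A - 1 ≤ A + j*h := by nlinarith [hh0.le, (Nat.cast_nonneg j : (0:ℝ) ≤ j)]
      have hnode2 : A + j*h ≤ B + 1 := by nlinarith [(Nat.cast_nonneg j : (0:ℝ) ≤ j)]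
      have hdist : dist s (A + j*h) < δ := by
        rw [Real.dist_eq]; linarith
      have hφs : |φ s - φ (A + j*h)| < ε := by
        have := hδ' s ⟨by linarith, by linarith⟩ (A + j*h) ⟨hnode1, hnode2⟩ hdist
        rwa [Real.dist_eq] at this
      rw [abs_mul, abs_of_nonneg (hat_nn j), abs_div, abs_of_pos hh0]
      have h1 : |φ s - φ (A + j*h)| / h ≤ ε / h := (div_le_div_iff_of_pos_right hh0).mpr hφs.le
      exact mul_le_mul_of_nonneg_right h1 (hat_nn j)
  have expand : ∀ j : ℕ, (φ s - φ (A + j*h))/h * hatf j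
      = φ s/h * hatf j - φ (A + j*h)/h * hatf j := fun j => by ring
  have hdiff : φ s - ∑ j ∈ Finset.range (n+1), φ (A + j*h)/h * hatf j
      = ∑ j ∈ Finset.range (n+1), (φ s - φ (A + j*h))/h * hatf j := by
    rw [Finset.sum_congr rfl fun j _ => expand j, Finset.sum_sub_distrib, ← Finset.mul_sum,
      hsum, div_mul_cancel₀ _ (ne_of_gt hh0)]
  calc |φ s - ∑ j ∈ Finset.range (n+1), φ (A + j*h)/h * hatf j|
      = |∑ j ∈ Finset.range (n+1), (φ s - φ (A + j*h))/h * hatf j| := by rw [hdiff]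
    _ ≤ ∑ j ∈ Finset.range (n+1), |(φ s - φ (A + j*h))/h * hatf j| :=
        Finset.abs_sum_le_sum_abs _ _
    _ ≤ ∑ j ∈ Finset.range (n+1), ε/h * hatf j := Finset.sum_le_sum hterm
    _ = ε/h * h := by rw [← Finset.mul_sum, hsum]
    _ = ε := div_mul_cancel₀ _ (ne_of_gt hh0)

variable {N : ℕ}

open Matrix

lemma conv_component (S : Setting N) (n₀ : Fin N) (hrow : ∀ n, S.U n₀ n ≠ 0) (w : Vec N) :
    ∃ b : Vec N, ∀ x : Vec N, conv S.U b x n₀ = ∑ i, w i * x i := by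
  have hUU : S.U * S.U.transpose = 1 := mul_eq_one_comm.mp S.hU
  set β : Vec N := fun n => S.U.transpose.mulVec w n / S.U n₀ n with hβ
  refine ⟨S.U.mulVec β, fun x => ?_⟩
  have hb : S.U.transpose.mulVec (S.U.mulVec β) = β := by
    rw [Matrix.mulVec_mulVec, S.hU, Matrix.one_mulVec]
  have key : (S.U.transpose.mulVec w) ⬝ᵥ (S.U.transpose.mulVec x) = w ⬝ᵥ x := by
    rw [Matrix.dotProduct_mulVec, Matrix.vecMul_transpose, Matrix.mulVec_mulVec, hUU,
      Matrix.one_mulVec]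
  unfold conv
  rw [hb]
  have : S.U.mulVec (β * S.U.transpose.mulVec x) n₀
      = ∑ n, S.U n₀ n * (β n * S.U.transpose.mulVec x n) := by
    simp [Matrix.mulVec, dotProduct]
  rw [this]
  have hterm : ∀ n, S.U n₀ n * (β n * S.U.transpose.mulVec x n)
      = S.U.transpose.mulVec w n * S.U.transpose.mulVec x n := by
    intro n
    rw [hβ]
    dsimp only
    rw [show S.U n₀ n * (S.U.transpose.mulVec w n / S.U n₀ n * S.U.transpose.mulVec x n)
        = (S.U n₀ n / S.U n₀ n) * (S.U.transpose.mulVec w n * S.U.transpose.mulVec x n) by ring,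
      div_self (hrow n), one_mul]
  rw [Finset.sum_congr rfl fun n _ => hterm n]
  have : ∑ n, S.U.transpose.mulVec w n * S.U.transpose.mulVec x n
      = (S.U.transpose.mulVec w) ⬝ᵥ (S.U.transpose.mulVec x) := rfl
  rw [this, key]
  rfl

lemma neuron_realize (S : Setting N) (n₀ : Fin N) (hrow : ∀ n, S.U n₀ n ≠ 0)
    (coef : ℝ) (w : Vec N) (t : ℝ) :
    ∃ p : Param N, ∀ x : Vec N, S.neuron x p = coef * relu1 ((∑ i, w i * x i) + t) := by
  obtain ⟨b, hb⟩ := conv_component S n₀ hrow w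
  refine ⟨(Pi.single n₀ coef, b, Pi.single n₀ t), fun x => ?_⟩
  unfold Setting.neuron
  dsimp only
  rw [Finset.sum_eq_single n₀]
  · simp only [Pi.single_eq_same]
    unfold relu relu1
    rw [Pi.add_apply, hb, Pi.single_eq_same]
  · intro i _ hi
    rw [Pi.single_eq_of_ne hi, zero_mul]
  · intro h; exact absurd (Finset.mem_univ n₀) h

lemma memB_of_avg (S : Setting N) (hW : S.W = ⊤) {M : ℕ} (hM : 0 < M) (p : Fin M → Param N)
    (r : Vec N → ℝ) (hrep : ∀ x ∈ S.dom, r x = (M:ℝ)⁻¹ * ∑ i, S.neuron x (p i)) : S.memB r := by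
  classical
  set ρ : Measure (Param N) := (M : ℝ≥0∞)⁻¹ • ∑ i : Fin M, Measure.dirac (p i) with hρdef
  have hMne : (M : ℝ≥0∞) ≠ 0 := Nat.cast_ne_zero.mpr hM.ne'
  have hMnetop : (M : ℝ≥0∞) ≠ ⊤ := ENNReal.natCast_ne_top M
  have hprob : IsProbabilityMeasure ρ := by
    constructor
    rw [hρdef]
    simp only [Measure.smul_apply, Measure.coe_finset_sum, Finset.sum_apply,
      Measure.dirac_apply_of_mem (Set.mem_univ _)]
    simp [Finset.card_univ, ENNReal.inv_mul_cancel hMne hMnetop]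
  have hint : ∀ (x : Vec N) (i : Fin M), Integrable (S.neuron x) (Measure.dirac (p i)) :=
    fun x i => (integrable_const (S.neuron x (p i))).congr (ae_eq_dirac (S.neuron x)).symm
  have hintρ : ∀ x : Vec N, Integrable (S.neuron x) ρ := by
    intro x
    rw [hρdef]
    exact (integrable_finset_sum_measure.mpr fun i _ => hint x i).smul_measure
      (ENNReal.inv_ne_top.mpr hMne)
  have hrepmem : ρ ∈ S.reps r := by
    refine ⟨hprob, ?_, fun x hx => ⟨hintρ x, ?_⟩⟩
    · have : {q : Param N | q.2.1 ∉ S.W} = ∅ := by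
        ext q; simp [hW]
      rw [this]; exact measure_empty
    · rw [hρdef, integral_smul_measure, integral_finset_sum_measure fun i _ => hint x i]
      simp only [integral_dirac]
      rw [ENNReal.toReal_inv, ENNReal.toReal_natCast, smul_eq_mul]
      exact hrep x hx
  refine ⟨⟨ρ, hrepmem⟩, ?_⟩
  have hcost : S.cost ρ < ⊤ := by
    unfold Setting.cost
    rw [hρdef, lintegral_smul_measure, lintegral_finset_sum_measure]
    simp only [lintegral_dirac]
    exact ENNReal.mul_lt_top (ENNReal.inv_lt_top.mpr (by exact_mod_cast hM))
      (ENNReal.sum_lt_top.mpr fun i _ => ENNReal.ofReal_lt_top)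
  have : S.barron r ≤ S.cost ρ := by
    unfold Setting.barron
    exact iInf₂_le ρ hrepmem
  exact lt_of_le_of_lt this hcost

def ridgeSet (N : ℕ) : Set (Vec N → ℝ) :=
  {g | ∃ w : Vec N, ∃ t : ℝ, g = fun x => relu1 ((∑ i, w i * x i) + t)}

lemma memB_of_ridge (S : Setting N) (hW : S.W = ⊤) (n₀ : Fin N) (hrow : ∀ n, S.U n₀ n ≠ 0)
    {r : Vec N → ℝ} (hr : r ∈ Submodule.span ℝ (ridgeSet N)) : S.memB r := by
  classical
  obtain ⟨n, cf, g, hsum⟩ := Submodule.mem_span_set'.mp hr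
  rcases Nat.eq_zero_or_pos n with hn | hn
  · subst hn
    have hr0 : r = 0 := by rw [← hsum]; simp
    refine memB_of_avg S hW (M := 1) one_pos (fun _ => (0, 0, 0)) r (fun x _ => ?_)
    have hz : S.neuron x (0, 0, 0) = 0 := by
      unfold Setting.neuron; simp
    rw [hr0]
    simpa using hz.symm
  · have hgen : ∀ i : Fin n, ∃ p : Param N,
        ∀ x, S.neuron x p = (n:ℝ) * cf i * ((g i : Vec N → ℝ) x) := by
      intro i
      obtain ⟨w, t, hwt⟩ := (g i).2
      obtain ⟨p, hp⟩ := neuron_realize S n₀ hrow ((n:ℝ) * cf i) w t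
      refine ⟨p, fun x => ?_⟩
      rw [hp x, hwt]
    choose p hp using hgen
    have hnne : (n : ℝ) ≠ 0 := Nat.cast_ne_zero.mpr hn.ne'
    refine memB_of_avg S hW hn p r (fun x _ => ?_)
    have h1 : ∑ i, S.neuron x (p i) = (n:ℝ) * ∑ i, cf i * ((g i : Vec N → ℝ) x) := by
      rw [Finset.mul_sum]
      exact Finset.sum_congr rfl fun i _ => by rw [hp i x]; ring
    have h2 : ∑ i, cf i * ((g i : Vec N → ℝ) x) = r x := by
      have := congrFun hsum x
      simpa [Finset.sum_apply, Pi.smul_apply, smul_eq_mul] using this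
    rw [h1, h2, ← mul_assoc, inv_mul_cancel₀ hnne, one_mul]

lemma ridge_approx (S : Setting N) (f : Vec N → ℝ) (hf : ContinuousOn f S.dom)
    (ε : ℝ) (hε : 0 < ε) :
    ∃ r ∈ Submodule.span ℝ (ridgeSet N), ∀ x ∈ S.dom, |f x - r x| ≤ ε := by
  classical
  haveI : CompactSpace ↥S.dom := isCompact_iff_compactSpace.mp S.hdomc
  haveI : Nonempty ↥S.dom := S.hdomne.to_subtype
  have gencont : ∀ (w : Vec N) (t : ℝ),
      Continuous fun x : ↥S.dom => Real.cos ((∑ i, w i * (x : Vec N) i) + t) := by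
    intro w t
    apply Real.continuous_cos.comp
    apply Continuous.add _ continuous_const
    exact continuous_finset_sum _ fun i _ =>
      continuous_const.mul ((continuous_apply i).comp continuous_subtype_val)
  set genC : Vec N → ℝ → C(↥S.dom, ℝ) :=
    fun w t => ⟨fun x => Real.cos ((∑ i, w i * (x : Vec N) i) + t), gencont w t⟩ with hgenC
  set T : Set C(↥S.dom, ℝ) := {g | ∃ w : Vec N, ∃ t : ℝ, g = genC w t} with hT
  set V := Submodule.span ℝ T with hV
  have hgenmem : ∀ w t, genC w t ∈ V := fun w t => Submodule.subset_span ⟨w, t, rfl⟩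
  have hprod : ∀ (w : Vec N) (t : ℝ) (w' : Vec N) (t' : ℝ), genC w t * genC w' t'
      = (1/2 : ℝ) • genC (w + w') (t + t') + (1/2 : ℝ) • genC (w - w') (t - t') := by
    intro w t w' t'
    ext x
    simp only [hgenC, ContinuousMap.mul_apply, ContinuousMap.add_apply,
      ContinuousMap.smul_apply, ContinuousMap.coe_mk, smul_eq_mul]
    have e1 : (∑ i, (w + w') i * (x : Vec N) i) + (t + t')
        = ((∑ i, w i * (x : Vec N) i) + t) + ((∑ i, w' i * (x : Vec N) i) + t') := by
      simp only [Pi.add_apply, add_mul, Finset.sum_add_distrib]; ring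
    have e2 : (∑ i, (w - w') i * (x : Vec N) i) + (t - t')
        = ((∑ i, w i * (x : Vec N) i) + t) - ((∑ i, w' i * (x : Vec N) i) + t') := by
      simp only [Pi.sub_apply, sub_mul, Finset.sum_sub_distrib]; ring
    have cosid : ∀ p q : ℝ, Real.cos p * Real.cos q
        = 1/2 * Real.cos (p + q) + 1/2 * Real.cos (p - q) := by
      intro p q; rw [Real.cos_add, Real.cos_sub]; ring
    rw [e1, e2, cosid]
  have hmulT : ∀ gg ∈ T, ∀ b ∈ V, gg * b ∈ V := by
    intro gg hgg b hb
    obtain ⟨w, t, rfl⟩ := hgg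
    induction hb using Submodule.span_induction with
    | mem y hy =>
        obtain ⟨w', t', rfl⟩ := hy
        rw [hprod]
        exact add_mem (Submodule.smul_mem _ _ (hgenmem _ _))
          (Submodule.smul_mem _ _ (hgenmem _ _))
    | zero => rw [mul_zero]; exact zero_mem _
    | add y z hy hz ihy ihz => rw [mul_add]; exact add_mem ihy ihz
    | smul c y hy ihy => rw [mul_smul_comm]; exact Submodule.smul_mem _ _ ihy
  have hmul' : ∀ a ∈ V, ∀ b ∈ V, a * b ∈ V := by
    intro a ha
    induction ha using Submodule.span_induction with
    | mem y hy => exact fun b hb => hmulT y hy b hb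
    | zero => intro b hb; rw [zero_mul]; exact zero_mem _
    | add y z hy hz ihy ihz => intro b hb; rw [add_mul]; exact add_mem (ihy b hb) (ihz b hb)
    | smul c y hy ihy =>
        intro b hb; rw [smul_mul_assoc]; exact Submodule.smul_mem _ _ (ihy b hb)
  have hmul : ∀ x y : C(↥S.dom, ℝ), x ∈ V → y ∈ V → x * y ∈ V :=
    fun x y hx hy => hmul' x hx y hy
  have hone : (1 : C(↥S.dom, ℝ)) ∈ V := by
    have h1 : (1 : C(↥S.dom, ℝ)) = genC 0 0 := by
      ext x; simp [hgenC]
    rw [h1]; exact hgenmem 0 0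
  set A : Subalgebra ℝ C(↥S.dom, ℝ) := V.toSubalgebra hone hmul with hA
  have hsep : A.SeparatesPoints := by
    intro x y hxy
    have hne : (x : Vec N) ≠ (y : Vec N) := Subtype.coe_ne_coe.mpr hxy
    obtain ⟨i, hi⟩ := Function.ne_iff.mp hne
    set d : ℝ := (y : Vec N) i - (x : Vec N) i with hd
    have hdne : d ≠ 0 := sub_ne_zero.mpr (Ne.symm hi)
    set w : Vec N := (fun j => if j = i then Real.pi / d else 0) with hw
    set t : ℝ := -(Real.pi / d) * (x : Vec N) i with ht
    refine ⟨_, ⟨genC w t, hgenmem w t, rfl⟩, ?_⟩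
    have hval : ∀ z : ↥S.dom, (∑ j, w j * (z : Vec N) j) = (Real.pi / d) * (z : Vec N) i := by
      intro z
      rw [hw]
      simp [ite_mul, Finset.sum_ite_eq']
    have happ : ∀ z : ↥S.dom, (genC w t) z = Real.cos ((Real.pi / d) * (z : Vec N) i + t) := by
      intro z
      show Real.cos ((∑ j, w j * (z : Vec N) j) + t) = _
      rw [hval z]
    have hx0 : Real.pi / d * (x : Vec N) i + t = 0 := by rw [ht]; ring
    have hy0 : Real.pi / d * (y : Vec N) i + t = Real.pi := by
      rw [ht]
      have hdd : Real.pi / d * (y : Vec N) i + -(Real.pi / d) * (x : Vec N) i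
          = Real.pi * (d / d) := by rw [hd]; ring
      rw [hdd, div_self hdne, mul_one]
    show (genC w t) x ≠ (genC w t) y
    rw [happ x, happ y, hx0, hy0, Real.cos_zero, Real.cos_pi]
    norm_num
  have happrox : ∀ gg ∈ V, ∀ δ : ℝ, 0 < δ →
      ∃ r ∈ Submodule.span ℝ (ridgeSet N), ∀ x : ↥S.dom, |gg x - r (x : Vec N)| ≤ δ := by
    intro gg hgg
    induction hgg using Submodule.span_induction with
    | mem y hy =>
        intro δ hδ
        obtain ⟨w, t, rfl⟩ := hy
        set ℓ : ↥S.dom → ℝ := fun x => (∑ i, w i * (x : Vec N) i) + t with hℓdef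
        have hℓ : Continuous ℓ := by
          apply Continuous.add _ continuous_const
          exact continuous_finset_sum _ fun i _ =>
            continuous_const.mul ((continuous_apply i).comp continuous_subtype_val)
        obtain ⟨xlo, _, hxlo'⟩ := isCompact_univ.exists_isMinOn Set.univ_nonempty
          hℓ.continuousOn
        obtain ⟨xhi, _, hxhi'⟩ := isCompact_univ.exists_isMaxOn Set.univ_nonempty
          hℓ.continuousOn
        have hxlo : ∀ z : ↥S.dom, ℓ xlo ≤ ℓ z := fun z => hxlo' (Set.mem_univ z)
        have hxhi : ∀ z : ↥S.dom, ℓ z ≤ ℓ xhi := fun z => hxhi' (Set.mem_univ z)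
        obtain ⟨m, h, cf, node, hh0, hbound⟩ :=
          pl_approx Real.cos Real.continuous_cos (ℓ xlo) (ℓ xhi) δ hδ
        set g1 : ℕ → Vec N → ℝ :=
          fun j x => relu1 ((∑ i, w i * x i) + (t - node j + h)) with hg1
        set g2 : ℕ → Vec N → ℝ :=
          fun j x => relu1 ((∑ i, w i * x i) + (t - node j)) with hg2
        set g3 : ℕ → Vec N → ℝ :=
          fun j x => relu1 ((∑ i, w i * x i) + (t - node j - h)) with hg3
        set r : Vec N → ℝ := ∑ j ∈ Finset.range m, cf j •
          (g1 j - (2:ℝ) • g2 j + g3 j) with hrdef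
        have hrmem : r ∈ Submodule.span ℝ (ridgeSet N) := by
          refine Submodule.sum_mem _ fun j _ => Submodule.smul_mem _ _ ?_
          exact add_mem (sub_mem (Submodule.subset_span ⟨w, t - node j + h, rfl⟩)
              (Submodule.smul_mem _ _ (Submodule.subset_span ⟨w, t - node j, rfl⟩)))
            (Submodule.subset_span ⟨w, t - node j - h, rfl⟩)

        refine ⟨r, hrmem, fun x => ?_⟩
        have hrx : r (x : Vec N) = ∑ j ∈ Finset.range m, cf j *
            (relu1 (ℓ x - node j + h) - 2 * relu1 (ℓ x - node j) + relu1 (ℓ x - node j - h)) := by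
          rw [hrdef]
          simp only [Finset.sum_apply, Pi.smul_apply, Pi.add_apply, Pi.sub_apply,
            smul_eq_mul, hℓdef, hg1, hg2, hg3]
          refine Finset.sum_congr rfl fun j _ => ?_
          rw [show (∑ i, w i * (x : Vec N) i) + (t - node j + h)
              = ((∑ i, w i * (x : Vec N) i) + t) - node j + h by ring,
            show (∑ i, w i * (x : Vec N) i) + (t - node j)
              = ((∑ i, w i * (x : Vec N) i) + t) - node j by ring,
            show (∑ i, w i * (x : Vec N) i) + (t - node j - h)
              = ((∑ i, w i * (x : Vec N) i) + t) - node j - h by ring]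
        have hgx : (genC w t) x = Real.cos (ℓ x) := rfl
        rw [hgx, hrx]
        exact hbound (ℓ x) ⟨hxlo x, hxhi x⟩
    | zero =>
        intro δ hδ
        exact ⟨0, zero_mem _, fun x => by simpa using hδ.le⟩
    | add y z hy hz ihy ihz =>
        intro δ hδ
        obtain ⟨r₁, hr₁, hb₁⟩ := ihy (δ/2) (by positivity)
        obtain ⟨r₂, hr₂, hb₂⟩ := ihz (δ/2) (by positivity)
        refine ⟨r₁ + r₂, add_mem hr₁ hr₂, fun x => ?_⟩
        simp only [ContinuousMap.add_apply, Pi.add_apply]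
        calc |y x + z x - (r₁ (x:Vec N) + r₂ (x:Vec N))|
            = |(y x - r₁ (x:Vec N)) + (z x - r₂ (x:Vec N))| := by ring_nf
          _ ≤ |y x - r₁ (x:Vec N)| + |z x - r₂ (x:Vec N)| := abs_add_le _ _
          _ ≤ δ/2 + δ/2 := add_le_add (hb₁ x) (hb₂ x)
          _ = δ := by ring
    | smul c y hy ihy =>
        intro δ hδ
        obtain ⟨r₁, hr₁, hb₁⟩ := ihy (δ/(|c|+1)) (by positivity)
        refine ⟨c • r₁, Submodule.smul_mem _ _ hr₁, fun x => ?_⟩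
        simp only [ContinuousMap.smul_apply, Pi.smul_apply, smul_eq_mul]
        rw [← mul_sub, abs_mul]
        have hc1 : |c| * (δ/(|c|+1)) ≤ δ := by
          rw [mul_div_assoc']
          rw [div_le_iff₀ (by positivity)]
          nlinarith [abs_nonneg c]
        calc |c| * |y x - r₁ (x:Vec N)| ≤ |c| * (δ/(|c|+1)) :=
              mul_le_mul_of_nonneg_left (hb₁ x) (abs_nonneg c)
          _ ≤ δ := hc1
  obtain ⟨g, hgapp⟩ := ContinuousMap.exists_mem_subalgebra_near_continuous_of_separatesPoints
    A hsep (fun x : ↥S.dom => f x) hf.restrict (ε/2) (by positivity)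
  have hgV : (g : C(↥S.dom, ℝ)) ∈ V := g.2
  obtain ⟨r, hrmem, hrb⟩ := happrox (g : C(↥S.dom, ℝ)) hgV (ε/2) (by positivity)
  refine ⟨r, hrmem, fun x hx => ?_⟩
  have h1 := hgapp ⟨x, hx⟩
  rw [Real.norm_eq_abs] at h1
  have h2 := hrb ⟨x, hx⟩
  calc |f x - r x| = |(f x - (g : C(↥S.dom, ℝ)) ⟨x, hx⟩) + ((g : C(↥S.dom, ℝ)) ⟨x, hx⟩ - r x)| := by
        ring_nf
    _ ≤ |f x - (g : C(↥S.dom, ℝ)) ⟨x, hx⟩| + |(g : C(↥S.dom, ℝ)) ⟨x, hx⟩ - r x| := abs_add_le _ _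
    _ ≤ ε/2 + ε/2 := add_le_add (by rw [abs_sub_comm]; exact h1.le) h2
    _ = ε := by ring

end BarronDense

/-- if `W = ℝ^N` and some row of `U` has all entries nonzero, then the
Barron space is dense in `C(Ω)`. -/
theorem barron_dense_in_continuous {N : ℕ} (S : Setting N) (hW : S.W = ⊤)
    (n₀ : Fin N) (hrow : ∀ n, S.U n₀ n ≠ 0)
    (f : Vec N → ℝ) (hf : ContinuousOn f S.dom) (ε : ℝ) (hε : 0 < ε) :
    ∃ g : Vec N → ℝ, S.memB g ∧ ∀ x ∈ S.dom, |f x - g x| ≤ ε := by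
  obtain ⟨r, hrmem, hrb⟩ := BarronDense.ridge_approx S f hf ε hε
  exact ⟨r, BarronDense.memB_of_ridge S hW n₀ hrow hrmem, hrb⟩
end
end

section
/- Assume that there exists an index 1 ≤ n_0 ≤ N such that every entry of the n_0-th row of U is nonzero. Then for every v ∈ ℝ^N and every w ∈ ℝ there exist vectors a, b, c ∈ ℝ^N such that aᵀ σ(b * x + c) = σ(vᵀ x + w) for all x ∈ ℝ^N; in particular, one may take a = e_{n_0}, c = w e_{n_0}, and b chosen so that the n_0-th component of b * x equals vᵀ x for all x ∈ ℝ^N, where e_{n_0} is the n_0-th standard basis vector. -/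
open MeasureTheory ENNReal

noncomputable section

/-- every classical neuron `σ(vᵀx + w)` can be realized as a graph neuron
`aᵀσ(b*x + c)`, with `a = e_{n₀}`, `c = w e_{n₀}` and `b` such that `(b*x)(n₀) = vᵀx`. -/
theorem neuron_realization {N : ℕ} (hN : 1 ≤ N) (U : Matrix (Fin N) (Fin N) ℝ)
    (hU : U.transpose * U = 1) (n₀ : Fin N) (hrow : ∀ n, U n₀ n ≠ 0)
    (v : Vec N) (w : ℝ) :
    ∃ a b c : Vec N,
      (∀ x : Vec N, ∑ i, a i * relu (conv U b x + c) i = max ((∑ i, v i * x i) + w) 0) ∧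
      a = (Pi.single n₀ 1 : Vec N) ∧ c = w • (Pi.single n₀ 1 : Vec N) ∧
      ∀ x : Vec N, conv U b x n₀ = ∑ i, v i * x i := by
  classical
  have hU2 : U * U.transpose = 1 := mul_eq_one_comm.mp hU
  set g : Vec N := fun n => U.transpose.mulVec v n / U n₀ n with hg
  have hb : ∀ x : Vec N, conv U (U.mulVec g) x n₀ = ∑ i, v i * x i := by
    intro x
    have hUtb : U.transpose.mulVec (U.mulVec g) = g := by
      rw [Matrix.mulVec_mulVec, hU, Matrix.one_mulVec]
    unfold conv
    rw [hUtb]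
    have key : ∀ n, U n₀ n * (g * U.transpose.mulVec x) n
        = U.transpose.mulVec v n * U.transpose.mulVec x n := by
      intro n
      simp only [Pi.mul_apply, hg]
      rw [mul_comm (U n₀ n), div_mul_eq_mul_div, div_mul_eq_mul_div,
        mul_div_assoc, div_self (hrow n), mul_one]
    calc U.mulVec (g * U.transpose.mulVec x) n₀
        = ∑ n, U n₀ n * (g * U.transpose.mulVec x) n := rfl
      _ = ∑ n, U.transpose.mulVec v n * U.transpose.mulVec x n :=
          Finset.sum_congr rfl (fun n _ => key n)
      _ = dotProduct (U.transpose.mulVec v) (U.transpose.mulVec x) := rfl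
      _ = ∑ i, v i * x i := by
          rw [Matrix.mulVec_transpose U v, ← Matrix.dotProduct_mulVec,
            Matrix.mulVec_mulVec, hU2, Matrix.one_mulVec]
          rfl
  refine ⟨(Pi.single n₀ 1 : Vec N), U.mulVec g, w • (Pi.single n₀ 1 : Vec N), ?_, rfl, rfl, hb⟩
  intro x
  have hsum : ∀ (f : Vec N), ∑ i, (Pi.single n₀ 1 : Vec N) i * f i = f n₀ := by
    intro f
    rw [Fintype.sum_eq_single n₀]
    · simp
    · intro i hi; simp [Pi.single_eq_of_ne hi]
  rw [hsum]
  simp only [relu, Pi.add_apply, Pi.smul_apply, Pi.single_eq_same, smul_eq_mul, mul_one, hb x]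
end
end

section
/- For every Q ≥ 0, every S ≥ 1 and every choice of points x_1, …, x_S ∈ Ω, the Rademacher complexity satisfies Rad_S(F_Q) = E[ sup_{f ∈ F_Q} S^{-1} ∑_{i=1}^S ξ_i f(x_i) ] ≤ 2 Q ( D_0 D_2 √(2 ln(2N)) + √(2 ln 2) ) S^{-1/2}. -/
open MeasureTheory ENNReal

noncomputable section

/-- a Rademacher sign -/
def sgn (b : Bool) : ℝ := if b then 1 else -1

set_option maxHeartbeats 1000000
section AuxRad
lemma sgn_mem (b : Bool) : sgn b = 1 ∨ sgn b = -1 := by cases b <;> simp [sgn]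

lemma sgn_abs (b : Bool) : |sgn b| = 1 := by rcases sgn_mem b with h | h <;> simp [h]

lemma sgn_not (b : Bool) : sgn (!b) = -sgn b := by cases b <;> simp [sgn]

lemma bdd_of_le {ι : Type*} {F : ι → ℝ} {C : ℝ} (h : ∀ k, F k ≤ C) :
    BddAbove (Set.range F) := ⟨C, by rintro r ⟨k, rfl⟩; exact h k⟩

lemma abs_max_zero_le (t : ℝ) : |max t 0| ≤ |t| := by
  rw [abs_of_nonneg (le_max_right t 0)]
  exact max_le (le_abs_self t) (abs_nonneg t)

lemma key_sup {ι : Type*} [Nonempty ι] (g u : ι → ℝ)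
    (B1 : BddAbove (Set.range fun k => g k + u k))
    (B2 : BddAbove (Set.range fun k => g k - u k)) :
    (⨆ k, g k + max (u k) 0) + (⨆ k, g k - max (u k) 0)
      ≤ (⨆ k, g k + u k) + (⨆ k, g k - u k) := by
  set C := (⨆ k, g k + u k) + (⨆ k, g k - u k) with hC
  have claim : ∀ k l, (g k + max (u k) 0) + (g l - max (u l) 0) ≤ C := by
    intro k l
    have habs : max (u k) 0 - max (u l) 0 ≤ |u k - u l| :=
      le_trans (le_abs_self _) (abs_max_sub_max_le_abs _ _ _)
    rcases le_total (u l) (u k) with h | h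
    · have h1 : g k + u k ≤ ⨆ m, g m + u m := le_ciSup B1 k
      have h2 : g l - u l ≤ ⨆ m, g m - u m := le_ciSup B2 l
      have : max (u k) 0 - max (u l) 0 ≤ u k - u l := by
        rw [abs_of_nonneg (by linarith)] at habs; linarith
      linarith
    · have h1 : g l + u l ≤ ⨆ m, g m + u m := le_ciSup B1 l
      have h2 : g k - u k ≤ ⨆ m, g m - u m := le_ciSup B2 k
      have : max (u k) 0 - max (u l) 0 ≤ u l - u k := by
        rw [abs_of_nonpos (by linarith)] at habs; linarith
      linarith
  have h2 : ∀ k, (⨆ l, g l - max (u l) 0) ≤ C - (g k + max (u k) 0) :=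
    fun k => ciSup_le fun l => by linarith [claim k l]
  have h3 : (⨆ k, g k + max (u k) 0) ≤ C - (⨆ l, g l - max (u l) 0) :=
    ciSup_le fun k => by linarith [h2 k]
  linarith

lemma key_sup' {ι : Type*} [Nonempty ι] (g u : ι → ℝ) (s : ℝ) (hs : s = 1 ∨ s = -1)
    (B1 : BddAbove (Set.range fun k => g k + s * u k))
    (B2 : BddAbove (Set.range fun k => g k + -s * u k)) :
    (⨆ k, g k + s * max (u k) 0) + (⨆ k, g k + -s * max (u k) 0)
      ≤ (⨆ k, g k + s * u k) + (⨆ k, g k + -s * u k) := by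
  rcases hs with rfl | rfl
  · simp only [one_mul, neg_neg, neg_one_mul, ← sub_eq_add_neg] at *
    exact key_sup g u B1 B2
  · simp only [one_mul, neg_neg, neg_one_mul, ← sub_eq_add_neg] at *
    rw [add_comm, add_comm (⨆ k, g k - u k)]
    exact key_sup g u B2 B1

lemma contraction_main {n : ℕ} {ι : Type*} [Nonempty ι] (y : ι → Fin n → ℝ) (M : ℝ)
    (hM0 : 0 ≤ M) (hM : ∀ k i, |y k i| ≤ M) :
    ∑ ξ : Fin n → Bool, ⨆ k, ∑ i, sgn (ξ i) * max (y k i) 0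
      ≤ ∑ ξ : Fin n → Bool, ⨆ k, ∑ i, sgn (ξ i) * y k i := by
  suffices h : ∀ A : Finset (Fin n),
      ∑ ξ : Fin n → Bool, ⨆ k, ∑ i, sgn (ξ i) * (if i ∈ A then max (y k i) 0 else y k i)
        ≤ ∑ ξ : Fin n → Bool, ⨆ k, ∑ i, sgn (ξ i) * y k i by
    have := h Finset.univ
    simpa using this
  intro A
  induction A using Finset.induction_on with
  | empty => simp
  | @insert a A' ha IH =>
    refine le_trans ?_ IH
    -- bound for individual terms
    have hterm : ∀ (ξ : Fin n → Bool) (k : ι) (i : Fin n) (B : Finset (Fin n)),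
        sgn (ξ i) * (if i ∈ B then max (y k i) 0 else y k i) ≤ M := by
      intro ξ k i B
      have h1 : |if i ∈ B then max (y k i) 0 else y k i| ≤ |y k i| := by
        split
        · exact abs_max_zero_le _
        · exact le_rfl
      calc sgn (ξ i) * (if i ∈ B then max (y k i) 0 else y k i)
          ≤ |sgn (ξ i) * (if i ∈ B then max (y k i) 0 else y k i)| := le_abs_self _
        _ = |sgn (ξ i)| * |if i ∈ B then max (y k i) 0 else y k i| := abs_mul _ _
        _ ≤ 1 * M := by
            rw [sgn_abs]
            exact mul_le_mul_of_nonneg_left (le_trans h1 (hM k i)) zero_le_one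
        _ = M := one_mul M
    set e := fun ξ : Fin n → Bool => Function.update ξ a (!ξ a) with he
    have hea : ∀ ξ, e ξ a = !ξ a := fun ξ => Function.update_self a (!ξ a) ξ
    have hene : ∀ (ξ) (i), i ≠ a → e ξ i = ξ i := fun ξ i hi => Function.update_of_ne hi _ ξ
    have hee : Function.Involutive e := by
      intro ξ; funext i
      by_cases hi : i = a
      · subst hi; rw [hea, hea]; simp
      · rw [hene _ _ hi, hene _ _ hi]
    set F₁ := fun ξ : Fin n → Bool =>
      ⨆ k, ∑ i, sgn (ξ i) * (if i ∈ insert a A' then max (y k i) 0 else y k i) with hF₁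
    set F₂ := fun ξ : Fin n → Bool =>
      ⨆ k, ∑ i, sgn (ξ i) * (if i ∈ A' then max (y k i) 0 else y k i) with hF₂
    have hsum : ∀ (h : (Fin n → Bool) → ℝ), ∑ ξ, h (e ξ) = ∑ ξ, h ξ :=
      fun h => Fintype.sum_bijective e hee.bijective _ _ (fun ξ => rfl)
    have hpair : ∀ ξ : Fin n → Bool, F₁ ξ + F₁ (e ξ) ≤ F₂ ξ + F₂ (e ξ) := by
      intro ξ
      set g := fun k => ∑ i ∈ Finset.univ.erase a,
        sgn (ξ i) * (if i ∈ A' then max (y k i) 0 else y k i) with hg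
      have hgle : ∀ k, g k ≤ n * M := by
        intro k
        calc g k ≤ ∑ _i ∈ Finset.univ.erase a, M :=
              Finset.sum_le_sum (fun i _ => hterm ξ k i A')
          _ = ((Finset.univ.erase a).card : ℝ) * M := by
              rw [Finset.sum_const, nsmul_eq_mul]
          _ ≤ n * M := by
              refine mul_le_mul_of_nonneg_right ?_ hM0
              have h1 : (Finset.univ.erase a).card ≤ n := by
                refine le_trans (Finset.card_erase_le) ?_
                simp [Finset.card_univ]
              exact_mod_cast h1
      have hrw : ∀ (ξ' : Fin n → Bool), (∀ i, i ≠ a → ξ' i = ξ i) →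
          (F₁ ξ' = ⨆ k, g k + sgn (ξ' a) * max (y k a) 0)
          ∧ (F₂ ξ' = ⨆ k, g k + sgn (ξ' a) * y k a) := by
        intro ξ' hξ'
        have hgen : ∀ B : Finset (Fin n), (⨆ k, ∑ i, sgn (ξ' i) * (if i ∈ B then max (y k i) 0 else y k i))
            = ⨆ k, (∑ i ∈ Finset.univ.erase a, sgn (ξ i) * (if i ∈ B then max (y k i) 0 else y k i))
              + sgn (ξ' a) * (if a ∈ B then max (y k a) 0 else y k a) := by
          intro B
          refine iSup_congr fun k => ?_
          rw [← Finset.sum_erase_add _ _ (Finset.mem_univ a)]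
          congr 1
          refine Finset.sum_congr rfl (fun i hi => ?_)
          rw [hξ' i (Finset.mem_erase.mp hi).1]
        constructor
        · simp only [hF₁]
          rw [hgen (insert a A')]
          refine iSup_congr fun k => ?_
          congr 1
          · refine Finset.sum_congr rfl (fun i hi => ?_)
            have hia : i ≠ a := (Finset.mem_erase.mp hi).1
            simp [Finset.mem_insert, hia]
          · simp
        · simp only [hF₂]
          rw [hgen A']
          refine iSup_congr fun k => ?_
          congr 1
          simp [ha]
      have h1 := hrw ξ (fun _ _ => rfl)
      have h2 := hrw (e ξ) (fun i hi => hene ξ i hi)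
      have hsgn : sgn (e ξ a) = -sgn (ξ a) := by rw [hea, sgn_not]
      rw [h1.1, h1.2, h2.1, h2.2, hsgn]
      exact key_sup' g (fun k => y k a) (sgn (ξ a)) (sgn_mem _)
        (bdd_of_le (fun k => by
          have := hgle k
          have h3 : sgn (ξ a) * y k a ≤ M := by
            calc sgn (ξ a) * y k a ≤ |sgn (ξ a) * y k a| := le_abs_self _
              _ = |sgn (ξ a)| * |y k a| := abs_mul _ _
              _ ≤ 1 * M := by rw [sgn_abs]; exact mul_le_mul_of_nonneg_left (hM k a) zero_le_one
              _ = M := one_mul M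
          show g k + sgn (ξ a) * y k a ≤ (n : ℝ) * M + M
          linarith))
        (bdd_of_le (fun k => by
          have := hgle k
          have h3 : -sgn (ξ a) * y k a ≤ M := by
            calc -sgn (ξ a) * y k a ≤ |(-sgn (ξ a)) * y k a| := le_abs_self _
              _ = |(-sgn (ξ a))| * |y k a| := abs_mul _ _
              _ ≤ 1 * M := by
                  rw [abs_neg, sgn_abs]
                  exact mul_le_mul_of_nonneg_left (hM k a) zero_le_one
              _ = M := one_mul M
          show g k + -sgn (ξ a) * y k a ≤ (n : ℝ) * M + M
          linarith))
    have h2 : (2:ℝ) * ∑ ξ, F₁ ξ ≤ 2 * ∑ ξ, F₂ ξ := by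
      have e1 : ∑ ξ, (F₁ ξ + F₁ (e ξ)) ≤ ∑ ξ, (F₂ ξ + F₂ (e ξ)) :=
        Finset.sum_le_sum (fun ξ _ => hpair ξ)
      rw [Finset.sum_add_distrib, Finset.sum_add_distrib, hsum F₁, hsum F₂] at e1
      linarith
    linarith

lemma massart {n : ℕ} {K : Type*} [Fintype K] [Nonempty K] (hK : 2 ≤ Fintype.card K)
    (v : K → Fin n → ℝ) (B : ℝ) (hB : 0 < B) (hv : ∀ k, ∑ i, (v k i)^2 ≤ B^2) :
    ∑ ξ : Fin n → Bool, ⨆ k, ∑ i, sgn (ξ i) * v k i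
      ≤ 2^n * (B * Real.sqrt (2 * Real.log (Fintype.card K))) := by
  classical
  set C : ℝ := (Fintype.card K : ℝ) with hCdef
  have hC : (2:ℝ) ≤ C := by rw [hCdef]; exact_mod_cast hK
  set L : ℝ := Real.log C with hLdef
  have hL : 0 < L := Real.log_pos (by linarith)
  have h2L : 0 < 2 * L := by linarith
  have hsq : Real.sqrt (2*L) * Real.sqrt (2*L) = 2*L := Real.mul_self_sqrt (le_of_lt h2L)
  have hsqpos : 0 < Real.sqrt (2*L) := Real.sqrt_pos.mpr h2L
  set lam : ℝ := Real.sqrt (2*L) / B with hlamdef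
  have hlam : 0 < lam := div_pos hsqpos hB
  set G : K → (Fin n → Bool) → ℝ := fun k ξ => ∑ i, sgn (ξ i) * v k i with hGdef
  set Sup : (Fin n → Bool) → ℝ := fun ξ => ⨆ k, G k ξ with hSupdef
  have htwon : (0:ℝ) < 2^n := by positivity
  -- per k: sum over sign patterns of exp factorizes
  have hstep1 : ∀ k, ∑ ξ : Fin n → Bool, Real.exp (lam * G k ξ) ≤ 2^n * Real.exp L := by
    intro k
    have hfac : ∑ ξ : Fin n → Bool, Real.exp (lam * G k ξ)
        = ∏ i, (Real.exp (lam * v k i) + Real.exp (-(lam * v k i))) := by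
      have h1 : ∀ ξ : Fin n → Bool, Real.exp (lam * G k ξ)
          = ∏ i, Real.exp (lam * (sgn (ξ i) * v k i)) := by
        intro ξ
        rw [← Real.exp_sum, hGdef, Finset.mul_sum]
      rw [Finset.sum_congr rfl (fun ξ _ => h1 ξ)]
      have hps := Finset.prod_univ_sum (t := fun _ : Fin n => (Finset.univ : Finset Bool))
        (f := fun i b => Real.exp (lam * (sgn b * v k i)))
      rw [Fintype.piFinset_univ] at hps
      rw [← hps]
      refine Finset.prod_congr rfl (fun i _ => ?_)
      rw [Fintype.sum_bool]
      simp [sgn, mul_neg]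
    rw [hfac]
    have hcosh : ∀ i, Real.exp (lam * v k i) + Real.exp (-(lam * v k i))
        ≤ 2 * Real.exp ((lam * v k i)^2 / 2) := by
      intro i
      have := Real.cosh_le_exp_half_sq (lam * v k i)
      rw [Real.cosh_eq] at this
      linarith
    calc ∏ i, (Real.exp (lam * v k i) + Real.exp (-(lam * v k i)))
        ≤ ∏ i, 2 * Real.exp ((lam * v k i)^2 / 2) := by
          refine Finset.prod_le_prod (fun i _ => by positivity) (fun i _ => hcosh i)
      _ = 2^n * Real.exp (∑ i, (lam * v k i)^2 / 2) := by
          rw [Finset.prod_mul_distrib, Finset.prod_const, Real.exp_sum]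
          simp [Finset.card_univ]
      _ ≤ 2^n * Real.exp L := by
          have h5 : ∑ i, (lam * v k i)^2 / 2 ≤ L := by
            have h6 : ∑ i, (lam * v k i)^2 / 2 = lam^2 / 2 * ∑ i, (v k i)^2 := by
              rw [Finset.mul_sum]; refine Finset.sum_congr rfl (fun i _ => by ring)
            rw [h6]
            have h7 : lam^2 = 2*L / B^2 := by
              rw [hlamdef, div_pow, sq]
              rw [hsq]
            have hBne : B ≠ 0 := ne_of_gt hB
            calc lam^2 / 2 * ∑ i, (v k i)^2 ≤ lam^2/2 * B^2 :=
                mul_le_mul_of_nonneg_left (hv k) (by positivity)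
              _ = L := by rw [h7]; field_simp
          exact mul_le_mul_of_nonneg_left (Real.exp_le_exp.mpr h5) (by positivity)
  -- sup ≤ sum of exps
  have hsup_exp : ∀ ξ, Real.exp (lam * Sup ξ) ≤ ∑ k, Real.exp (lam * G k ξ) := by
    intro ξ
    obtain ⟨k0, hk0⟩ := Finite.exists_max (fun k => G k ξ)
    have h1 : Sup ξ ≤ G k0 ξ := ciSup_le hk0
    calc Real.exp (lam * Sup ξ) ≤ Real.exp (lam * G k0 ξ) :=
          Real.exp_le_exp.mpr (mul_le_mul_of_nonneg_left h1 (le_of_lt hlam))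
      _ ≤ ∑ k, Real.exp (lam * G k ξ) :=
          Finset.single_le_sum (f := fun k => Real.exp (lam * G k ξ))
            (fun k _ => (Real.exp_pos _).le) (Finset.mem_univ k0)
  -- Jensen
  set Avg : ℝ := (2^n : ℝ)⁻¹ * ∑ ξ : Fin n → Bool, Sup ξ with hAvgdef
  have hjensen : Real.exp (lam * Avg) ≤ (2^n : ℝ)⁻¹ * ∑ ξ : Fin n → Bool, Real.exp (lam * Sup ξ) := by
    have hcard : ∑ _ξ : Fin n → Bool, (2^n : ℝ)⁻¹ = 1 := by
      rw [Finset.sum_const, nsmul_eq_mul, Finset.card_univ]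
      have : Fintype.card (Fin n → Bool) = 2^n := by
        rw [Fintype.card_fun]; simp
      rw [this]
      push_cast
      field_simp
    have := convexOn_exp.map_sum_le (t := Finset.univ) (w := fun _ : Fin n → Bool => (2^n : ℝ)⁻¹)
      (p := fun ξ => lam * Sup ξ) (fun _ _ => by positivity) hcard (fun _ _ => Set.mem_univ _)
    have harg : ∑ ξ : Fin n → Bool, (2^n : ℝ)⁻¹ • (lam * Sup ξ) = lam * Avg := by
      calc ∑ ξ : Fin n → Bool, (2^n : ℝ)⁻¹ • (lam * Sup ξ)
          = ∑ ξ : Fin n → Bool, lam * ((2^n : ℝ)⁻¹ * Sup ξ) :=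
            Finset.sum_congr rfl (fun ξ _ => by rw [smul_eq_mul]; ring)
        _ = lam * ∑ ξ : Fin n → Bool, (2^n : ℝ)⁻¹ * Sup ξ := (Finset.mul_sum _ _ _).symm
        _ = lam * ((2^n : ℝ)⁻¹ * ∑ ξ : Fin n → Bool, Sup ξ) := by rw [← Finset.mul_sum]
        _ = lam * Avg := by rw [hAvgdef]
    rw [harg] at this
    refine le_trans this (le_of_eq ?_)
    rw [Finset.mul_sum]
    exact Finset.sum_congr rfl (fun ξ _ => by rw [smul_eq_mul])
  have hchain : Real.exp (lam * Avg) ≤ C * Real.exp L := by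
    refine le_trans hjensen ?_
    have h1 : ∑ ξ : Fin n → Bool, Real.exp (lam * Sup ξ)
        ≤ ∑ ξ : Fin n → Bool, ∑ k, Real.exp (lam * G k ξ) :=
      Finset.sum_le_sum (fun ξ _ => hsup_exp ξ)
    have h2 : ∑ ξ : Fin n → Bool, ∑ k, Real.exp (lam * G k ξ)
        = ∑ k, ∑ ξ : Fin n → Bool, Real.exp (lam * G k ξ) := Finset.sum_comm
    have h3 : ∑ k, ∑ ξ : Fin n → Bool, Real.exp (lam * G k ξ) ≤ ∑ _k : K, (2:ℝ)^n * Real.exp L :=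
      Finset.sum_le_sum (fun k _ => hstep1 k)
    have h4 : ∑ _k : K, (2:ℝ)^n * Real.exp L = C * (2^n * Real.exp L) := by
      rw [Finset.sum_const, nsmul_eq_mul, Finset.card_univ]
    calc (2^n : ℝ)⁻¹ * ∑ ξ : Fin n → Bool, Real.exp (lam * Sup ξ)
        ≤ (2^n : ℝ)⁻¹ * (C * (2^n * Real.exp L)) := by
          refine mul_le_mul_of_nonneg_left ?_ (by positivity)
          rw [← h4]; exact le_trans h1 (le_of_eq h2 |>.trans h3)
      _ = C * Real.exp L := by field_simp
  have hlog : lam * Avg ≤ 2 * L := by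
    have h1 : lam * Avg ≤ Real.log (C * Real.exp L) :=
      (Real.le_log_iff_exp_le (by positivity)).mpr hchain
    rw [Real.log_mul (by linarith) (Real.exp_ne_zero _), Real.log_exp] at h1
    rw [hLdef]
    linarith
  have hAvg : Avg ≤ B * Real.sqrt (2*L) := by
    have h1 : Avg ≤ 2*L / lam := by
      rw [le_div_iff₀ hlam]
      linarith [hlog]
    have h2 : 2*L/lam = B * Real.sqrt (2*L) := by
      rw [hlamdef, div_div_eq_mul_div, mul_comm (2*L) B, mul_div_assoc]
      congr 1
      rw [eq_comm, eq_div_iff (ne_of_gt hsqpos), hsq]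
    rw [h2] at h1; exact h1
  have : ∑ ξ : Fin n → Bool, Sup ξ = 2^n * Avg := by
    rw [hAvgdef]; field_simp
  rw [hSupdef] at this
  rw [this]
  exact mul_le_mul_of_nonneg_left hAvg (by positivity)

-- ### auxiliary lemmas
lemma conv_zero_left {N : ℕ} (U : Matrix (Fin N) (Fin N) ℝ) (x : Vec N) : conv U 0 x = 0 := by
  simp [conv, Matrix.mulVec_zero]

lemma conv_zero_right {N : ℕ} (U : Matrix (Fin N) (Fin N) ℝ) (b : Vec N) : conv U b 0 = 0 := by
  simp [conv, Matrix.mulVec_zero]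

lemma conv_smul_left {N : ℕ} (U : Matrix (Fin N) (Fin N) ℝ) (t : ℝ) (b x : Vec N) :
    conv U (t • b) x = t • conv U b x := by
  simp [conv, Matrix.mulVec_smul, smul_mul_assoc]

lemma conv_add_right {N : ℕ} (U : Matrix (Fin N) (Fin N) ℝ) (b x y : Vec N) :
    conv U b (x + y) = conv U b x + conv U b y := by
  simp [conv, Matrix.mulVec_add, mul_add]

lemma conv_smul_right {N : ℕ} (U : Matrix (Fin N) (Fin N) ℝ) (b : Vec N) (t : ℝ) (x : Vec N) :
    conv U b (t • x) = t • conv U b x := by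
  simp [conv, Matrix.mulVec_smul, mul_smul_comm]

lemma conv_sum_right {N n : ℕ} (U : Matrix (Fin N) (Fin N) ℝ) (b : Vec N)
    (t : Fin n → ℝ) (z : Fin n → Vec N) :
    conv U b (∑ i, t i • z i) = ∑ i, t i • conv U b (z i) := by
  classical
  have h : ∀ s : Finset (Fin n), conv U b (∑ i ∈ s, t i • z i) = ∑ i ∈ s, t i • conv U b (z i) := by
    intro s
    induction s using Finset.induction_on with
    | empty => simp [conv_zero_right]
    | @insert a s ha IH =>
        rw [Finset.sum_insert ha, conv_add_right, conv_smul_right, IH, Finset.sum_insert ha]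
  exact h _

namespace Setting
variable {N : ℕ} (S : Setting N)

lemma nrm_zero' : S.nrm 0 = 0 := (S.nrm_eq_zero 0).mpr rfl

lemma conorm_zero' : S.conorm 0 = 0 := (S.conorm_eq_zero 0 S.W.zero_mem).mpr rfl

lemma conorm_nonneg' {b : Vec N} (hb : b ∈ S.W) : 0 ≤ S.conorm b := by
  have h1 := S.conorm_add b (-b) hb (S.W.neg_mem hb)
  have h2 : S.conorm (-b) = S.conorm b := by
    have h3 := S.conorm_smul (-1) b hb
    simpa using h3
  have h4 : b + -b = (0 : Vec N) := by ring
  rw [h4, S.conorm_zero'] at h1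
  linarith

lemma dual_ge (hnrm : S.nrm = fun x => ‖x‖) (a : Vec N) : ∑ j, |a j| ≤ S.dual a := by
  have hbdd : BddAbove {t : ℝ | ∃ x : Vec N, S.nrm x ≤ 1 ∧ t = ∑ i, a i * x i} := by
    refine ⟨∑ j, |a j|, ?_⟩
    rintro t ⟨x, hx, rfl⟩
    refine Finset.sum_le_sum fun j _ => ?_
    have h1 : |x j| ≤ 1 := by
      have h2 := norm_le_pi_norm x j
      rw [hnrm] at hx
      rw [Real.norm_eq_abs] at h2
      exact le_trans h2 hx
    calc a j * x j ≤ |a j * x j| := le_abs_self _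
      _ = |a j| * |x j| := abs_mul _ _
      _ ≤ |a j| * 1 := mul_le_mul_of_nonneg_left h1 (abs_nonneg _)
      _ = |a j| := mul_one _
  have hmem : (∑ j, |a j|) ∈ {t : ℝ | ∃ x : Vec N, S.nrm x ≤ 1 ∧ t = ∑ i, a i * x i} := by
    refine ⟨fun j => if 0 ≤ a j then 1 else -1, ?_, ?_⟩
    · rw [hnrm]
      refine (pi_norm_le_iff_of_nonneg zero_le_one).mpr fun j => ?_
      split <;> simp
    · refine Finset.sum_congr rfl fun j _ => ?_
      simp only []
      by_cases h : 0 ≤ a j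
      · rw [if_pos h, abs_of_nonneg h]; ring
      · rw [if_neg h, abs_of_neg (lt_of_not_ge h)]; ring
  exact le_csSup hbdd hmem

end Setting

end AuxRad

/-- Rademacher complexity bound for `F_Q` (with `‖·‖ = ‖·‖_∞`). -/
theorem rademacher_complexity_bound {N : ℕ} (S : Setting N)
    (hnrm : S.nrm = fun x => ‖x‖) (D0 D2 : ℝ) (hD0 : 0 < D0) (hD2 : 0 < D2)
    (hdom : ∀ x ∈ S.dom, ‖x‖ ≤ D0)
    (hconv2 : ∀ b ∈ S.W, ∀ (m : ℕ) (εs : Fin m → ℝ) (ys : Fin m → Vec N),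
      (∀ i, εs i = 1 ∨ εs i = -1) → (∀ i, ys i ∈ S.dom) →
      ‖conv S.U b (∑ i, εs i • ys i)‖ ≤ D2 * S.conorm b * ‖∑ i, εs i • ys i‖)
    (Q : ℝ) (hQ : 0 ≤ Q) (n : ℕ) (hn : 1 ≤ n) (xs : Fin n → Vec N)
    (hxs : ∀ i, xs i ∈ S.dom) :
    ((2 : ℝ) ^ n)⁻¹ * ∑ ξ : Fin n → Bool,
        sSup {r : ℝ | ∃ f : Vec N → ℝ, S.memB f ∧ S.barron f ≤ ENNReal.ofReal Q ∧
          r = (n : ℝ)⁻¹ * ∑ i, sgn (ξ i) * f (xs i)}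
      ≤ 2 * Q * (D0 * D2 * Real.sqrt (2 * Real.log (2 * (N : ℝ)))
          + Real.sqrt (2 * Real.log 2)) / Real.sqrt n := by
  classical
  have hNpos : 0 < N := S.hN
  have hnpos : (0:ℝ) < n := by exact_mod_cast hn
  have j0 : Fin N := ⟨0, hNpos⟩
  have hq0 : ((0,0) : Vec N × Vec N).1 ∈ S.W ∧
      S.conorm ((0,0) : Vec N × Vec N).1 + S.nrm ((0,0) : Vec N × Vec N).2 ≤ 1 :=
    ⟨S.W.zero_mem, by rw [S.conorm_zero', S.nrm_zero']; norm_num⟩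
  set T := {q : Vec N × Vec N // q.1 ∈ S.W ∧ S.conorm q.1 + S.nrm q.2 ≤ 1} with hT
  set q0 : T := ⟨((0 : Vec N), (0 : Vec N)), hq0⟩ with hq0'
  haveI : Nonempty (T × Fin N) := ⟨(q0, j0)⟩
  set y : T × Fin N → Fin n → ℝ := fun k i => (conv S.U k.1.1.1 (xs i) + k.1.1.2) k.2 with hy
  have hy1 : ∀ k i, |y k i| ≤ 1 := by
    rintro ⟨⟨⟨b, c⟩, hbW, hbc⟩, j⟩ i
    show |(conv S.U b (xs i) + c) j| ≤ 1
    have h1 : |(conv S.U b (xs i) + c) j| ≤ ‖conv S.U b (xs i) + c‖ := by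
      have h2 := norm_le_pi_norm (conv S.U b (xs i) + c) j
      rwa [Real.norm_eq_abs] at h2
    have h2 : S.nrm (conv S.U b (xs i) + c) ≤ S.conorm b + S.nrm c :=
      le_trans (S.nrm_add _ _) (add_le_add (S.conv_nrm_le b hbW (xs i) (hxs i)) le_rfl)
    have hbc' : S.conorm b + S.nrm c ≤ 1 := hbc
    calc |(conv S.U b (xs i) + c) j| ≤ ‖conv S.U b (xs i) + c‖ := h1
      _ = S.nrm (conv S.U b (xs i) + c) := by rw [hnrm]
      _ ≤ S.conorm b + S.nrm c := h2
      _ ≤ 1 := hbc'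
  set P : (Fin n → Bool) → ℝ := fun ξ => ⨆ k, ∑ i, sgn (ξ i) * max (y k i) 0 with hP
  set P2 : (Fin n → Bool) → ℝ := fun ξ => ⨆ k, ∑ i, sgn (ξ i) * y k i with hP2
  have hterm1 : ∀ (ξ : Fin n → Bool) (k : T × Fin N) (i : Fin n),
      sgn (ξ i) * max (y k i) 0 ≤ 1 := by
    intro ξ k i
    calc sgn (ξ i) * max (y k i) 0 ≤ |sgn (ξ i) * max (y k i) 0| := le_abs_self _
      _ = |sgn (ξ i)| * |max (y k i) 0| := abs_mul _ _
      _ ≤ 1 * 1 := by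
          rw [sgn_abs]
          exact mul_le_mul_of_nonneg_left (le_trans (abs_max_zero_le _) (hy1 k i)) zero_le_one
      _ = 1 := one_mul 1
  have bddP : ∀ ξ : Fin n → Bool,
      BddAbove (Set.range fun k => ∑ i, sgn (ξ i) * max (y k i) 0) := by
    intro ξ
    refine bdd_of_le (C := (n : ℝ)) fun k => ?_
    calc ∑ i, sgn (ξ i) * max (y k i) 0 ≤ ∑ _i : Fin n, (1:ℝ) :=
          Finset.sum_le_sum fun i _ => hterm1 ξ k i
      _ = n := by simp
  have hPnn : ∀ ξ, 0 ≤ P ξ := by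
    intro ξ
    have h1 : (∑ i, sgn (ξ i) * max (y (q0, j0) i) 0) = 0 := by
      refine Finset.sum_eq_zero fun i _ => ?_
      have h2 : y (q0, j0) i = 0 := by
        show (conv S.U 0 (xs i) + 0) j0 = 0
        rw [conv_zero_left]; simp
      rw [h2]; simp
    exact le_trans (le_of_eq h1.symm) (le_ciSup (bddP ξ) (q0, j0))
  set H0 : (Fin n → Bool) → ℝ := fun ξ => P ξ + P (fun i => !ξ i) with hH0
  have hH0nn : ∀ ξ, 0 ≤ H0 ξ := fun ξ => add_nonneg (hPnn ξ) (hPnn _)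
  -- coordinatewise bound
  have hcoord : ∀ (b : Vec N), b ∈ S.W → ∀ (c : Vec N) (j : Fin N) (ξ : Fin n → Bool),
      |∑ i, sgn (ξ i) * relu (conv S.U b (xs i) + c) j| ≤ (S.conorm b + S.nrm c) * H0 ξ := by
    intro b hb c j ξ
    have hnc : 0 ≤ S.nrm c := by rw [hnrm]; exact norm_nonneg c
    have hcb : 0 ≤ S.conorm b := S.conorm_nonneg' hb
    have hwnn : 0 ≤ S.conorm b + S.nrm c := by linarith
    rcases eq_or_lt_of_le hwnn with hw0 | hwpos
    · -- degenerate case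
      have h1 : S.conorm b = 0 := le_antisymm (by linarith) hcb
      have h2 : S.nrm c = 0 := le_antisymm (by linarith) hnc
      have hb0 : b = 0 := (S.conorm_eq_zero b hb).mp h1
      have hc0 : c = 0 := (S.nrm_eq_zero c).mp h2
      have hsum0 : (∑ i, sgn (ξ i) * relu (conv S.U b (xs i) + c) j) = 0 := by
        refine Finset.sum_eq_zero fun i _ => ?_
        rw [hb0, hc0, conv_zero_left]
        have : relu ((0 : Vec N) + 0) j = 0 := by simp [relu]
        rw [this, mul_zero]
      rw [hsum0, abs_zero]
      exact mul_nonneg hwnn (hH0nn ξ)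
    · set w := S.conorm b + S.nrm c with hwdef
      have hwne : w ≠ 0 := ne_of_gt hwpos
      have hqmem : ((w⁻¹ • b, w⁻¹ • c) : Vec N × Vec N).1 ∈ S.W ∧
          S.conorm ((w⁻¹ • b, w⁻¹ • c) : Vec N × Vec N).1
            + S.nrm ((w⁻¹ • b, w⁻¹ • c) : Vec N × Vec N).2 ≤ 1 := by
        refine ⟨S.W.smul_mem _ hb, ?_⟩
        show S.conorm (w⁻¹ • b) + S.nrm (w⁻¹ • c) ≤ 1
        rw [S.conorm_smul _ _ hb, S.nrm_smul, abs_of_nonneg (inv_nonneg.mpr (le_of_lt hwpos)),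
          ← mul_add, ← hwdef, inv_mul_cancel₀ hwne]
      set q : T := ⟨(w⁻¹ • b, w⁻¹ • c), hqmem⟩ with hq
      have hz : ∀ i, y (q, j) i = w⁻¹ * (conv S.U b (xs i) + c) j := by
        intro i
        show (conv S.U (w⁻¹ • b) (xs i) + w⁻¹ • c) j = _
        rw [conv_smul_left]
        show (w⁻¹ • conv S.U b (xs i) + w⁻¹ • c) j = _
        rw [← smul_add]
        rfl
      have hkey : ∀ i, relu (conv S.U b (xs i) + c) j = w * max (y (q, j) i) 0 := by
        intro i
        rw [hz i]
        show max ((conv S.U b (xs i) + c) j) 0 = _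
        rw [mul_max_of_nonneg _ _ (le_of_lt hwpos), mul_zero, ← mul_assoc,
          mul_inv_cancel₀ hwne, one_mul]
      have hsum_eq : ∑ i, sgn (ξ i) * relu (conv S.U b (xs i) + c) j
          = w * ∑ i, sgn (ξ i) * max (y (q, j) i) 0 := by
        rw [Finset.mul_sum]
        refine Finset.sum_congr rfl fun i _ => ?_
        rw [hkey i]; ring
      rw [hsum_eq, abs_mul, abs_of_nonneg (le_of_lt hwpos)]
      refine mul_le_mul_of_nonneg_left ?_ (le_of_lt hwpos)
      refine abs_le.mpr ⟨?_, ?_⟩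
      · have hlb : -(∑ i, sgn (ξ i) * max (y (q, j) i) 0) ≤ P (fun i => !ξ i) := by
          have he : -(∑ i, sgn (ξ i) * max (y (q, j) i) 0)
              = ∑ i, sgn (!ξ i) * max (y (q, j) i) 0 := by
            rw [← Finset.sum_neg_distrib]
            exact Finset.sum_congr rfl fun i _ => by rw [sgn_not]; ring
          rw [he]
          exact le_ciSup (bddP _) (q, j)
        simp only [hH0]
        linarith [hPnn ξ]
      · have hub : (∑ i, sgn (ξ i) * max (y (q, j) i) 0) ≤ P ξ := le_ciSup (bddP ξ) (q, j)
        simp only [hH0]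
        linarith [hPnn (fun i => !ξ i)]
  -- pointwise neuron bound
  have hpoint : ∀ (ξ : Fin n → Bool) (p : Param N), p.2.1 ∈ S.W →
      |∑ i, sgn (ξ i) * S.neuron (xs i) p| ≤ S.weight p * H0 ξ := by
    intro ξ p hp
    obtain ⟨a, b, c⟩ := p
    simp only at hp
    have hnc : 0 ≤ S.nrm c := by rw [hnrm]; exact norm_nonneg c
    have hcb : 0 ≤ S.conorm b := S.conorm_nonneg' hp
    simp only [Setting.neuron, Setting.weight]
    have hswap : ∑ i, sgn (ξ i) * (∑ j, a j * relu (conv S.U b (xs i) + c) j)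
        = ∑ j, a j * (∑ i, sgn (ξ i) * relu (conv S.U b (xs i) + c) j) := by
      simp_rw [Finset.mul_sum]
      rw [Finset.sum_comm]
      exact Finset.sum_congr rfl fun j _ => Finset.sum_congr rfl fun i _ => by ring
    rw [hswap]
    have hwH : 0 ≤ (S.conorm b + S.nrm c) * H0 ξ := mul_nonneg (by linarith) (hH0nn ξ)
    calc |∑ j, a j * (∑ i, sgn (ξ i) * relu (conv S.U b (xs i) + c) j)|
        ≤ ∑ j, |a j * (∑ i, sgn (ξ i) * relu (conv S.U b (xs i) + c) j)| :=
          Finset.abs_sum_le_sum_abs _ _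
      _ ≤ ∑ j, |a j| * ((S.conorm b + S.nrm c) * H0 ξ) := by
          refine Finset.sum_le_sum fun j _ => ?_
          rw [abs_mul]
          exact mul_le_mul_of_nonneg_left (hcoord b hp c j ξ) (abs_nonneg _)
      _ = (∑ j, |a j|) * ((S.conorm b + S.nrm c) * H0 ξ) := (Finset.sum_mul _ _ _).symm
      _ ≤ S.dual a * ((S.conorm b + S.nrm c) * H0 ξ) :=
          mul_le_mul_of_nonneg_right (S.dual_ge hnrm a) hwH
      _ = S.dual a * (S.conorm b + S.nrm c) * H0 ξ := by ring
  -- the sSup bound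
  have hsSup : ∀ ξ : Fin n → Bool,
      sSup {r : ℝ | ∃ f : Vec N → ℝ, S.memB f ∧ S.barron f ≤ ENNReal.ofReal Q ∧
        r = (n : ℝ)⁻¹ * ∑ i, sgn (ξ i) * f (xs i)} ≤ Q / n * H0 ξ := by
    intro ξ
    refine Real.sSup_le ?_ (mul_nonneg (div_nonneg hQ hnpos.le) (hH0nn ξ))
    rintro r ⟨f, hfB, hfQ, rfl⟩
    have key : ∀ δ : ℝ, 0 < δ →
        (n:ℝ)⁻¹ * ∑ i, sgn (ξ i) * f (xs i) ≤ (Q + δ)/n * H0 ξ := by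
      intro δ hδ
      obtain ⟨ρ, hρ, hcost⟩ : ∃ ρ ∈ S.reps f, S.cost ρ < ENNReal.ofReal (Q + δ) := by
        have h1 : S.barron f < ENNReal.ofReal (Q + δ) :=
          lt_of_le_of_lt hfQ ((ENNReal.ofReal_lt_ofReal_iff (by linarith)).mpr (by linarith))
        unfold Setting.barron at h1
        rw [iInf_lt_iff] at h1
        obtain ⟨ρ, h1⟩ := h1
        rw [iInf_lt_iff] at h1
        obtain ⟨hρ, h1⟩ := h1
        exact ⟨ρ, hρ, h1⟩
      obtain ⟨hprob, hnull, hrep⟩ := hρ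
      set X : Param N → ℝ := fun p => ∑ i, sgn (ξ i) * S.neuron (xs i) p with hX
      have hXint : Integrable X ρ :=
        integrable_finset_sum _ (fun i _ => ((hrep (xs i) (hxs i)).1.const_mul _))
      have hfeq : ∑ i, sgn (ξ i) * f (xs i) = ∫ p, X p ∂ρ := by
        rw [hX]
        rw [integral_finset_sum _ (fun i _ => ((hrep (xs i) (hxs i)).1.const_mul _))]
        refine Finset.sum_congr rfl fun i _ => ?_
        rw [(hrep (xs i) (hxs i)).2, integral_const_mul]
      have hWae : ∀ᵐ p ∂ρ, p.2.1 ∈ S.W := by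
        rw [MeasureTheory.ae_iff]
        exact hnull
      have habs : ∀ᵐ p ∂ρ, ENNReal.ofReal |X p|
          ≤ ENNReal.ofReal (H0 ξ) * ENNReal.ofReal (S.weight p) := by
        refine hWae.mono fun p hp => ?_
        have h2 := hpoint ξ p hp
        calc ENNReal.ofReal |X p| ≤ ENNReal.ofReal (H0 ξ * S.weight p) :=
              ENNReal.ofReal_le_ofReal (by rw [hX]; linarith)
          _ = _ := ENNReal.ofReal_mul (hH0nn ξ)
      have hint1 : ∫ p, X p ∂ρ ≤ ∫ p, |X p| ∂ρ :=
        integral_mono hXint hXint.abs (fun p => le_abs_self _)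
      have hint2 : ∫ p, |X p| ∂ρ = (∫⁻ p, ENNReal.ofReal |X p| ∂ρ).toReal :=
        integral_eq_lintegral_of_nonneg_ae (Filter.Eventually.of_forall fun p => abs_nonneg _)
          hXint.abs.aestronglyMeasurable
      have hint3 : ∫⁻ p, ENNReal.ofReal |X p| ∂ρ
          ≤ ENNReal.ofReal (H0 ξ) * ENNReal.ofReal (Q + δ) := by
        calc ∫⁻ p, ENNReal.ofReal |X p| ∂ρ
            ≤ ∫⁻ p, ENNReal.ofReal (H0 ξ) * ENNReal.ofReal (S.weight p) ∂ρ :=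
              lintegral_mono_ae habs
          _ = ENNReal.ofReal (H0 ξ) * ∫⁻ p, ENNReal.ofReal (S.weight p) ∂ρ :=
              lintegral_const_mul' _ _ ENNReal.ofReal_ne_top
          _ ≤ ENNReal.ofReal (H0 ξ) * ENNReal.ofReal (Q + δ) := mul_le_mul_right hcost.le _
      have hint4 : (∫⁻ p, ENNReal.ofReal |X p| ∂ρ).toReal ≤ H0 ξ * (Q + δ) := by
        refine ENNReal.toReal_le_of_le_ofReal (mul_nonneg (hH0nn ξ) (by linarith)) ?_
        exact le_trans hint3 (le_of_eq (ENNReal.ofReal_mul (hH0nn ξ)).symm)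
      have hfin : ∑ i, sgn (ξ i) * f (xs i) ≤ H0 ξ * (Q + δ) := by
        rw [hfeq]
        calc ∫ p, X p ∂ρ ≤ ∫ p, |X p| ∂ρ := hint1
          _ = (∫⁻ p, ENNReal.ofReal |X p| ∂ρ).toReal := hint2
          _ ≤ H0 ξ * (Q + δ) := hint4
      calc (n:ℝ)⁻¹ * ∑ i, sgn (ξ i) * f (xs i) ≤ (n:ℝ)⁻¹ * (H0 ξ * (Q + δ)) :=
            mul_le_mul_of_nonneg_left hfin (by positivity)
        _ = (Q + δ)/n * H0 ξ := by ring
    rcases eq_or_lt_of_le (hH0nn ξ) with h0 | h0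
    · have h1 := key 1 one_pos
      rw [← h0] at h1 ⊢
      simpa using h1
    · refine le_of_forall_pos_le_add fun ε hε => ?_
      have h1 := key (ε * n / H0 ξ) (by positivity)
      calc (n:ℝ)⁻¹ * ∑ i, sgn (ξ i) * f (xs i)
          ≤ (Q + ε * n / H0 ξ)/n * H0 ξ := h1
        _ = Q / n * H0 ξ + ε := by field_simp
  -- expectation identities and bounds
  have hnotinv : Function.Involutive (fun ξ : Fin n → Bool => (fun i => !ξ i)) := by
    intro ξ; funext i; simp
  have hsumnot : ∑ ξ : Fin n → Bool, P (fun i => !ξ i) = ∑ ξ : Fin n → Bool, P ξ :=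
    Fintype.sum_bijective _ hnotinv.bijective _ _ (fun ξ => rfl)
  have hexp : ∑ ξ : Fin n → Bool, H0 ξ = 2 * ∑ ξ : Fin n → Bool, P ξ := by
    simp only [hH0]
    rw [Finset.sum_add_distrib, hsumnot]
    ring
  have hcontr : ∑ ξ : Fin n → Bool, P ξ ≤ ∑ ξ : Fin n → Bool, P2 ξ :=
    contraction_main y 1 zero_le_one hy1
  have hP2b : ∀ ξ : Fin n → Bool,
      P2 ξ ≤ D2 * ‖∑ i, sgn (ξ i) • xs i‖ + |∑ i, sgn (ξ i)| := by
    intro ξ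
    show (⨆ k, ∑ i, sgn (ξ i) * y k i) ≤ _
    refine ciSup_le ?_
    rintro ⟨⟨⟨b, c⟩, hbW, hbc⟩, j⟩
    have hcb : 0 ≤ S.conorm b := S.conorm_nonneg' hbW
    have hnc : 0 ≤ S.nrm c := by rw [hnrm]; exact norm_nonneg c
    have hcb1 : S.conorm b ≤ 1 := by linarith
    have hnc1 : S.nrm c ≤ 1 := by linarith
    have hSg : conv S.U b (∑ i, sgn (ξ i) • xs i) = ∑ i, sgn (ξ i) • conv S.U b (xs i) :=
      conv_sum_right _ _ _ _
    have h1 : ∑ i, sgn (ξ i) * y (⟨(b,c), ⟨hbW, hbc⟩⟩, j) i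
        = (conv S.U b (∑ i, sgn (ξ i) • xs i)) j + (∑ i, sgn (ξ i)) * c j := by
      rw [hSg]
      show ∑ i, sgn (ξ i) * (conv S.U b (xs i) + c) j = _
      rw [Finset.sum_apply, Finset.sum_mul, ← Finset.sum_add_distrib]
      refine Finset.sum_congr rfl fun i _ => ?_
      show sgn (ξ i) * ((conv S.U b (xs i)) j + c j)
          = (sgn (ξ i) • conv S.U b (xs i)) j + sgn (ξ i) * c j
      rw [Pi.smul_apply, smul_eq_mul]; ring
    rw [h1]
    have h2 : (conv S.U b (∑ i, sgn (ξ i) • xs i)) j ≤ D2 * ‖∑ i, sgn (ξ i) • xs i‖ := by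
      have h3 := hconv2 b hbW n (fun i => sgn (ξ i)) xs (fun i => sgn_mem _) hxs
      have h4 : |(conv S.U b (∑ i, sgn (ξ i) • xs i)) j|
          ≤ ‖conv S.U b (∑ i, sgn (ξ i) • xs i)‖ := by
        have h5 := norm_le_pi_norm (conv S.U b (∑ i, sgn (ξ i) • xs i)) j
        rwa [Real.norm_eq_abs] at h5
      have h5 : D2 * S.conorm b * ‖∑ i, sgn (ξ i) • xs i‖ ≤ D2 * ‖∑ i, sgn (ξ i) • xs i‖ := by
        have h5' := mul_le_mul_of_nonneg_right hcb1
          (mul_nonneg hD2.le (norm_nonneg (∑ i, sgn (ξ i) • xs i)))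
        calc D2 * S.conorm b * ‖∑ i, sgn (ξ i) • xs i‖
            = S.conorm b * (D2 * ‖∑ i, sgn (ξ i) • xs i‖) := by ring
          _ ≤ 1 * (D2 * ‖∑ i, sgn (ξ i) • xs i‖) := h5'
          _ = D2 * ‖∑ i, sgn (ξ i) • xs i‖ := one_mul _
      calc (conv S.U b (∑ i, sgn (ξ i) • xs i)) j
          ≤ |(conv S.U b (∑ i, sgn (ξ i) • xs i)) j| := le_abs_self _
        _ ≤ ‖conv S.U b (∑ i, sgn (ξ i) • xs i)‖ := h4
        _ ≤ D2 * S.conorm b * ‖∑ i, sgn (ξ i) • xs i‖ := h3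
        _ ≤ D2 * ‖∑ i, sgn (ξ i) • xs i‖ := h5
    have h6 : (∑ i, sgn (ξ i)) * c j ≤ |∑ i, sgn (ξ i)| := by
      have h7 : |c j| ≤ S.nrm c := by
        rw [hnrm]
        have h8 := norm_le_pi_norm c j
        rwa [Real.norm_eq_abs] at h8
      calc (∑ i, sgn (ξ i)) * c j ≤ |(∑ i, sgn (ξ i)) * c j| := le_abs_self _
        _ = |∑ i, sgn (ξ i)| * |c j| := abs_mul _ _
        _ ≤ |∑ i, sgn (ξ i)| * 1 :=
            mul_le_mul_of_nonneg_left (le_trans h7 hnc1) (abs_nonneg _)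
        _ = |∑ i, sgn (ξ i)| := mul_one _
    linarith
  -- Massart application 1: coordinates of the signed sum
  have hA : ∑ ξ : Fin n → Bool, ‖∑ i, sgn (ξ i) • xs i‖
      ≤ 2^n * ((D0 * Real.sqrt n) * Real.sqrt (2 * Real.log (2 * (N:ℝ)))) := by
    haveI : Nonempty (Fin N × Bool) := ⟨(j0, true)⟩
    set v : Fin N × Bool → Fin n → ℝ := fun k i => sgn k.2 * xs i k.1 with hv
    have hsqn : (0:ℝ) < Real.sqrt n := Real.sqrt_pos.mpr hnpos
    have hvb : ∀ k, ∑ i, (v k i)^2 ≤ (D0 * Real.sqrt n)^2 := by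
      intro k
      have h1 : ∀ i, (v k i)^2 ≤ D0^2 := by
        intro i
        have h2 : |xs i k.1| ≤ D0 := by
          have h3 := norm_le_pi_norm (xs i) k.1
          rw [Real.norm_eq_abs] at h3
          exact le_trans h3 (hdom _ (hxs i))
        have h4 : (v k i)^2 = (xs i k.1)^2 := by
          show (sgn k.2 * xs i k.1)^2 = _
          rcases sgn_mem k.2 with h | h <;> rw [h] <;> ring
        rw [h4]
        nlinarith [abs_nonneg (xs i k.1), sq_abs (xs i k.1), le_abs_self (xs i k.1),
          neg_abs_le (xs i k.1)]
      calc ∑ i, (v k i)^2 ≤ ∑ _i : Fin n, D0^2 := Finset.sum_le_sum fun i _ => h1 i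
        _ = n * D0^2 := by rw [Finset.sum_const, nsmul_eq_mul, Finset.card_univ]; simp
        _ = (D0 * Real.sqrt n)^2 := by rw [mul_pow, Real.sq_sqrt hnpos.le]; ring
    have hm := massart (n := n) (K := Fin N × Bool)
      (by rw [Fintype.card_prod, Fintype.card_fin, Fintype.card_bool]; omega)
      v (D0 * Real.sqrt n) (mul_pos hD0 hsqn) hvb
    have hcard : ((Fintype.card (Fin N × Bool) : ℕ) : ℝ) = 2 * (N:ℝ) := by
      rw [Fintype.card_prod, Fintype.card_fin, Fintype.card_bool]
      push_cast; ring
    rw [hcard] at hm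
    refine le_trans (Finset.sum_le_sum fun ξ _ => ?_) hm
    have hbd : BddAbove (Set.range fun k : Fin N × Bool => ∑ i, sgn (ξ i) * v k i) :=
      (Set.finite_range _).bddAbove
    have hneg : ∀ j : Fin N,
        ∑ i, sgn (ξ i) * v (j, false) i = -(∑ i, sgn (ξ i) * v (j, true) i) := by
      intro j
      rw [← Finset.sum_neg_distrib]
      refine Finset.sum_congr rfl fun i _ => ?_
      show sgn (ξ i) * (sgn false * xs i j) = -(sgn (ξ i) * (sgn true * xs i j))
      simp [sgn]
    have hpos : 0 ≤ ⨆ k : Fin N × Bool, ∑ i, sgn (ξ i) * v k i := by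
      have h1 := le_ciSup hbd (j0, true)
      have h2 := le_ciSup hbd (j0, false)
      rw [hneg j0] at h2
      linarith
    refine (pi_norm_le_iff_of_nonneg hpos).mpr fun j => ?_
    rw [Real.norm_eq_abs]
    have hco : (∑ i, sgn (ξ i) • xs i) j = ∑ i, sgn (ξ i) * v (j, true) i := by
      rw [Finset.sum_apply]
      refine Finset.sum_congr rfl fun i _ => ?_
      show (sgn (ξ i) • xs i) j = sgn (ξ i) * (sgn true * xs i j)
      rw [Pi.smul_apply, smul_eq_mul]; simp [sgn]
    rw [hco]
    refine abs_le.mpr ⟨?_, le_ciSup hbd (j, true)⟩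
    have h2 := le_ciSup hbd (j, false)
    rw [hneg j] at h2
    linarith
  -- Massart application 2: |sum of signs|
  have hTm : ∑ ξ : Fin n → Bool, |∑ i, sgn (ξ i)|
      ≤ 2^n * (Real.sqrt n * Real.sqrt (2 * Real.log 2)) := by
    set v : Bool → Fin n → ℝ := fun ε _ => sgn ε with hv
    have hsqn : (0:ℝ) < Real.sqrt n := Real.sqrt_pos.mpr hnpos
    have hvb : ∀ ε, ∑ i, (v ε i)^2 ≤ (Real.sqrt n)^2 := by
      intro ε
      have h1 : ∀ i : Fin n, (v ε i)^2 = 1 := fun i => by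
        show (sgn ε)^2 = 1
        rcases sgn_mem ε with h | h <;> rw [h] <;> norm_num
      rw [Finset.sum_congr rfl (fun i _ => h1 i), Finset.sum_const, Real.sq_sqrt hnpos.le]
      simp
    have hm := massart (n := n) (K := Bool) (by simp) v (Real.sqrt n) hsqn hvb
    have hcard : ((Fintype.card Bool : ℕ) : ℝ) = 2 := by simp
    rw [hcard] at hm
    refine le_trans (Finset.sum_le_sum fun ξ _ => ?_) hm
    have hbd : BddAbove (Set.range fun ε : Bool => ∑ i, sgn (ξ i) * v ε i) :=
      (Set.finite_range _).bddAbove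
    have htrue : ∑ i, sgn (ξ i) * v true i = ∑ i, sgn (ξ i) := by
      refine Finset.sum_congr rfl fun i _ => ?_
      show sgn (ξ i) * sgn true = sgn (ξ i)
      simp [sgn]
    have hfalse : ∑ i, sgn (ξ i) * v false i = -(∑ i, sgn (ξ i)) := by
      rw [← Finset.sum_neg_distrib]
      refine Finset.sum_congr rfl fun i _ => ?_
      show sgn (ξ i) * sgn false = -(sgn (ξ i))
      simp [sgn]
    refine abs_le.mpr ⟨?_, ?_⟩
    · have h2 := le_ciSup hbd false
      rw [hfalse] at h2
      linarith
    · have h2 := le_ciSup hbd true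
      rw [htrue] at h2
      exact h2
  -- final assembly
  have h2npos : (0:ℝ) < 2^n := by positivity
  have hsqn : (0:ℝ) < Real.sqrt n := Real.sqrt_pos.mpr hnpos
  calc ((2 : ℝ) ^ n)⁻¹ * ∑ ξ : Fin n → Bool,
        sSup {r : ℝ | ∃ f : Vec N → ℝ, S.memB f ∧ S.barron f ≤ ENNReal.ofReal Q ∧
          r = (n : ℝ)⁻¹ * ∑ i, sgn (ξ i) * f (xs i)}
      ≤ ((2 : ℝ) ^ n)⁻¹ * ∑ ξ : Fin n → Bool, (Q / n * H0 ξ) :=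
        mul_le_mul_of_nonneg_left (Finset.sum_le_sum fun ξ _ => hsSup ξ) (by positivity)
    _ = ((2 : ℝ) ^ n)⁻¹ * (Q / n) * (2 * ∑ ξ : Fin n → Bool, P ξ) := by
        rw [← Finset.mul_sum, hexp]; ring
    _ ≤ ((2 : ℝ) ^ n)⁻¹ * (Q / n) * (2 * (D2 * (2^n * ((D0 * Real.sqrt n)
          * Real.sqrt (2 * Real.log (2 * (N:ℝ)))))
          + 2^n * (Real.sqrt n * Real.sqrt (2 * Real.log 2)))) := by
        have hs1 : ∑ ξ : Fin n → Bool, P ξ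
            ≤ D2 * ∑ ξ : Fin n → Bool, ‖∑ i, sgn (ξ i) • xs i‖
              + ∑ ξ : Fin n → Bool, |∑ i, sgn (ξ i)| := by
          refine le_trans hcontr ?_
          calc ∑ ξ : Fin n → Bool, P2 ξ
              ≤ ∑ ξ : Fin n → Bool, (D2 * ‖∑ i, sgn (ξ i) • xs i‖ + |∑ i, sgn (ξ i)|) :=
                Finset.sum_le_sum fun ξ _ => hP2b ξ
            _ = _ := by rw [Finset.sum_add_distrib, Finset.mul_sum]
        have hs2 : D2 * ∑ ξ : Fin n → Bool, ‖∑ i, sgn (ξ i) • xs i‖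
            ≤ D2 * (2^n * ((D0 * Real.sqrt n) * Real.sqrt (2 * Real.log (2 * (N:ℝ))))) :=
          mul_le_mul_of_nonneg_left hA hD2.le
        refine mul_le_mul_of_nonneg_left ?_ (by positivity)
        linarith [hTm]
    _ = 2 * Q * (D0 * D2 * Real.sqrt (2 * Real.log (2 * (N : ℝ)))
          + Real.sqrt (2 * Real.log 2)) / Real.sqrt n := by
        set s := Real.sqrt (n:ℝ) with hsdef
        have hs : s * s = (n:ℝ) := Real.mul_self_sqrt hnpos.le
        have hsne : s ≠ 0 := ne_of_gt hsqn
        have h2ne : ((2:ℝ)^n) ≠ 0 := ne_of_gt h2npos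
        rw [← hs]
        field_simp
end
end

section
/- For all signs ξ_i ∈ {−1, 1} and all points x_i ∈ Ω, 1 ≤ i ≤ S, one has sup_{f ∈ F_Q} ∑_{i=1}^S ξ_i f(x_i) ≤ Q · sup_{(b,c) ∈ T} ‖ ∑_{i=1}^S ξ_i σ(b * x_i + c) ‖_∞. -/
open MeasureTheory ENNReal

noncomputable section

section Aux

variable {N : ℕ}

lemma Setting.conorm_zero (S : Setting N) : S.conorm 0 = 0 :=
  (S.conorm_eq_zero 0 S.W.zero_mem).mpr rfl

lemma Setting.conorm_nonneg (S : Setting N) {b : Vec N} (hb : b ∈ S.W) :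
    0 ≤ S.conorm b := by
  have h1 : S.conorm (b + (-1 : ℝ) • b) ≤ S.conorm b + S.conorm ((-1:ℝ) • b) :=
    S.conorm_add b _ hb (S.W.smul_mem _ hb)
  have h2 : S.conorm ((-1:ℝ) • b) = S.conorm b := by
    rw [S.conorm_smul _ _ hb]; simp
  have h3 : b + (-1:ℝ) • b = 0 := by simp
  rw [h3, S.conorm_zero, h2] at h1; linarith

lemma Setting.nrm_zero (S : Setting N) : S.nrm 0 = 0 := (S.nrm_eq_zero 0).mpr rfl

lemma relu_zero : relu (0 : Vec N) = 0 := by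
  funext i; simp [relu]

lemma relu_smul {t : ℝ} (ht : 0 ≤ t) (w : Vec N) : relu (t • w) = t • relu w := by
  funext i
  simp only [relu, Pi.smul_apply, smul_eq_mul]
  rw [mul_max_of_nonneg _ _ ht, mul_zero]

lemma conv_smul (U : Matrix (Fin N) (Fin N) ℝ) (t : ℝ) (b x : Vec N) :
    conv U (t • b) x = t • conv U b x := by
  simp [conv, Matrix.mulVec_smul, smul_mul_assoc]

lemma conv_zero (U : Matrix (Fin N) (Fin N) ℝ) (x : Vec N) : conv U 0 x = 0 := by
  have h := conv_smul U 0 0 x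
  simpa using h

lemma Setting.dual_bdd (S : Setting N) (hnrm : S.nrm = fun x => ‖x‖) (a : Vec N) :
    BddAbove {t : ℝ | ∃ x : Vec N, S.nrm x ≤ 1 ∧ t = ∑ i, a i * x i} := by
  refine ⟨∑ i, |a i|, ?_⟩
  rintro t ⟨x, hx, rfl⟩
  rw [hnrm] at hx
  refine Finset.sum_le_sum fun i _ => ?_
  calc a i * x i ≤ |a i * x i| := le_abs_self _
    _ = |a i| * |x i| := abs_mul _ _
    _ ≤ |a i| * 1 := by
        refine mul_le_mul_of_nonneg_left ?_ (abs_nonneg _)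
        exact le_trans (norm_le_pi_norm x i) hx
    _ = |a i| := mul_one _

lemma Setting.dual_nonneg (S : Setting N) (hnrm : S.nrm = fun x => ‖x‖) (a : Vec N) :
    0 ≤ S.dual a := by
  refine le_csSup (S.dual_bdd hnrm a) ⟨0, ?_, by simp⟩
  rw [S.nrm_zero]; exact zero_le_one

lemma Setting.pairing_le (S : Setting N) (hnrm : S.nrm = fun x => ‖x‖) (a v : Vec N) :
    ∑ i, a i * v i ≤ S.dual a * ‖v‖ := by
  rcases eq_or_ne v 0 with rfl | hv
  · simp
  · have hvpos : 0 < ‖v‖ := norm_pos_iff.mpr hv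
    have hx : S.nrm (‖v‖⁻¹ • v) ≤ 1 := by
      rw [hnrm]; simp only [norm_smul, norm_inv, norm_norm]
      rw [inv_mul_cancel₀ hvpos.ne']
    have hmem : (∑ i, a i * (‖v‖⁻¹ • v) i) ≤ S.dual a :=
      le_csSup (S.dual_bdd hnrm a) ⟨_, hx, rfl⟩
    have : ∑ i, a i * v i = ‖v‖ * ∑ i, a i * (‖v‖⁻¹ • v) i := by
      rw [Finset.mul_sum]
      refine Finset.sum_congr rfl fun i _ => ?_
      simp only [Pi.smul_apply, smul_eq_mul]
      field_simp
    rw [this, mul_comm (S.dual a) ‖v‖]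
    exact mul_le_mul_of_nonneg_left hmem hvpos.le

lemma ofReal_max_zero (a : ℝ) : ENNReal.ofReal (max a 0) = ENNReal.ofReal a := by
  rcases le_total a 0 with h | h
  · rw [max_eq_right h, ENNReal.ofReal_eq_zero.mpr h]; simp
  · rw [max_eq_left h]

end Aux


/-- for fixed signs and sample points,
`sup_{f ∈ F_Q} ∑ ξᵢ f(xᵢ) ≤ Q · sup_{(b,c) ∈ T} ‖∑ ξᵢ σ(b*xᵢ + c)‖_∞`. -/
theorem sup_over_FQ_le {N : ℕ} (S : Setting N)
    (hnrm : S.nrm = fun x => ‖x‖) (Q : ℝ) (hQ : 0 ≤ Q)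
    (n : ℕ) (ξ : Fin n → ℝ) (hξ : ∀ i, ξ i = 1 ∨ ξ i = -1)
    (xs : Fin n → Vec N) (hxs : ∀ i, xs i ∈ S.dom) :
    sSup {r : ℝ | ∃ f : Vec N → ℝ, S.memB f ∧ S.barron f ≤ ENNReal.ofReal Q ∧
        r = ∑ i, ξ i * f (xs i)}
      ≤ Q * sSup {r : ℝ | ∃ b c : Vec N, b ∈ S.W ∧ S.conorm b + ‖c‖ = 1 ∧
        r = ‖∑ i, ξ i • relu (conv S.U b (xs i) + c)‖} := by
  classical
  set Tset : Set ℝ := {r : ℝ | ∃ b c : Vec N, b ∈ S.W ∧ S.conorm b + ‖c‖ = 1 ∧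
        r = ‖∑ i, ξ i • relu (conv S.U b (xs i) + c)‖} with hTset
  haveI hNe : Nonempty (Fin N) := Fin.pos_iff_nonempty.mp S.hN
  have hterm : ∀ b ∈ S.W, ∀ (c : Vec N) (i : Fin n),
      ‖relu (conv S.U b (xs i) + c)‖ ≤ S.conorm b + ‖c‖ := by
    intro b hb c i
    have h1 := S.relu_nrm_le (conv S.U b (xs i) + c)
    have h2 := S.nrm_add (conv S.U b (xs i)) c
    have h3 := S.conv_nrm_le b hb (xs i) (hxs i)
    simp only [hnrm] at h1 h2 h3
    linarith
  have hbdd : BddAbove Tset := by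
    refine ⟨(n : ℝ), ?_⟩
    rintro r ⟨b, c, hb, hbc, rfl⟩
    have hone : ∀ i : Fin n, ‖ξ i • relu (conv S.U b (xs i) + c)‖ ≤ 1 := by
      intro i
      rw [norm_smul]
      have habs : ‖ξ i‖ = 1 := by rcases hξ i with h | h <;> simp [h]
      rw [habs, one_mul, ← hbc]
      exact hterm b hb c i
    calc ‖∑ i, ξ i • relu (conv S.U b (xs i) + c)‖
        ≤ ∑ i, ‖ξ i • relu (conv S.U b (xs i) + c)‖ := norm_sum_le _ _
      _ ≤ ∑ _i : Fin n, (1 : ℝ) := Finset.sum_le_sum fun i _ => hone i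
      _ = n := by simp
  have hmem0 : ‖∑ i, ξ i • relu (conv S.U (0 : Vec N) (xs i) + fun _ => (1:ℝ))‖ ∈ Tset := by
    refine ⟨0, fun _ => (1:ℝ), S.W.zero_mem, ?_, rfl⟩
    rw [S.conorm_zero, pi_norm_const]
    norm_num
  have hK0 : 0 ≤ sSup Tset := le_trans (norm_nonneg _) (le_csSup hbdd hmem0)
  have hB : ∀ b ∈ S.W, ∀ c : Vec N,
      ‖∑ i, ξ i • relu (conv S.U b (xs i) + c)‖ ≤ (S.conorm b + ‖c‖) * sSup Tset := by
    intro b hb c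
    have hs0 : 0 ≤ S.conorm b + ‖c‖ := add_nonneg (S.conorm_nonneg hb) (norm_nonneg c)
    rcases eq_or_lt_of_le hs0 with hseq | hspos
    · have hcb : S.conorm b = 0 := by
        have h1 := S.conorm_nonneg hb
        have h2 := norm_nonneg c
        linarith
      have hcc : c = 0 := by
        have h1 := S.conorm_nonneg hb
        have h3 := norm_nonneg c
        exact norm_eq_zero.mp (by linarith)
      have hbb : b = 0 := (S.conorm_eq_zero b hb).mp hcb
      subst hbb; subst hcc
      have hz : ∀ i : Fin n, relu (conv S.U (0 : Vec N) (xs i) + 0) = 0 := by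
        intro i
        rw [conv_zero, add_zero, relu_zero]
      simp only [hz, smul_zero, Finset.sum_const_zero, norm_zero]
      rw [norm_zero] at hs0
      exact mul_nonneg hs0 hK0
    · set s := S.conorm b + ‖c‖ with hs
      have hb' : (s⁻¹ • b) ∈ S.W := S.W.smul_mem _ hb
      have hcs : S.conorm (s⁻¹ • b) + ‖s⁻¹ • c‖ = 1 := by
        rw [S.conorm_smul _ _ hb, norm_smul, Real.norm_eq_abs,
          abs_of_pos (inv_pos.mpr hspos), ← mul_add, ← hs, inv_mul_cancel₀ hspos.ne']
      have hle : ‖∑ i, ξ i • relu (conv S.U (s⁻¹ • b) (xs i) + s⁻¹ • c)‖ ≤ sSup Tset :=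
        le_csSup hbdd ⟨_, _, hb', hcs, rfl⟩
      have hscale : ∑ i, ξ i • relu (conv S.U b (xs i) + c)
          = s • ∑ i, ξ i • relu (conv S.U (s⁻¹ • b) (xs i) + s⁻¹ • c) := by
        rw [Finset.smul_sum]
        refine Finset.sum_congr rfl fun i _ => ?_
        have hw : conv S.U b (xs i) + c
            = s • (conv S.U (s⁻¹ • b) (xs i) + s⁻¹ • c) := by
          rw [smul_add, ← conv_smul, smul_smul, smul_smul, mul_inv_cancel₀ hspos.ne',
            one_smul, one_smul]
        rw [hw, relu_smul hspos.le, smul_comm]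
      rw [hscale, norm_smul, Real.norm_eq_abs, abs_of_pos hspos]
      exact mul_le_mul_of_nonneg_left hle hspos.le
  have hpoint : ∀ p : Param N, p.2.1 ∈ S.W →
      (∑ i, ξ i * S.neuron (xs i) p) ≤ S.weight p * sSup Tset := by
    rintro ⟨a, b, c⟩ hb
    simp only at hb
    simp only [Setting.neuron, Setting.weight, hnrm]
    have hswap : (∑ i, ξ i * ∑ j, a j * relu (conv S.U b (xs i) + c) j)
        = ∑ j, a j * (∑ i, ξ i • relu (conv S.U b (xs i) + c)) j := by
      simp only [Finset.sum_apply, Pi.smul_apply, smul_eq_mul, Finset.mul_sum]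
      rw [Finset.sum_comm]
      exact Finset.sum_congr rfl fun j _ => Finset.sum_congr rfl fun i _ => by ring
    calc (∑ i, ξ i * ∑ j, a j * relu (conv S.U b (xs i) + c) j)
        = ∑ j, a j * (∑ i, ξ i • relu (conv S.U b (xs i) + c)) j := hswap
      _ ≤ S.dual a * ‖∑ i, ξ i • relu (conv S.U b (xs i) + c)‖ := S.pairing_le hnrm a _
      _ ≤ S.dual a * ((S.conorm b + ‖c‖) * sSup Tset) :=
          mul_le_mul_of_nonneg_left (hB b hb c) (S.dual_nonneg hnrm a)
      _ = S.dual a * (S.conorm b + ‖c‖) * sSup Tset := by ring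
  refine Real.sSup_le ?_ (mul_nonneg hQ hK0)
  rintro r ⟨f, hf, hbar, rfl⟩
  have key : ∀ ε : ℝ, 0 < ε → ∑ i, ξ i * f (xs i) ≤ (Q + ε) * sSup Tset := by
    intro ε hε
    have hlt : S.barron f < ENNReal.ofReal (Q + ε) :=
      lt_of_le_of_lt hbar (by
        rw [ENNReal.ofReal_lt_ofReal_iff (by linarith)]
        linarith)
    simp only [Setting.barron, iInf_lt_iff] at hlt
    obtain ⟨ρ, hρ, hcost⟩ := hlt
    obtain ⟨hprob, hW0, hint⟩ := hρ
    haveI := hprob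
    set g : Param N → ℝ := fun p => ∑ i, ξ i * S.neuron (xs i) p with hg
    have hgint : Integrable g ρ := by
      apply integrable_finset_sum
      intro i _
      exact ((hint (xs i) (hxs i)).1).const_mul _
    have hrg : ∑ i, ξ i * f (xs i) = ∫ p, g p ∂ρ := by
      rw [hg]
      rw [integral_finset_sum _ (fun i _ => ((hint (xs i) (hxs i)).1).const_mul (ξ i))]
      refine Finset.sum_congr rfl fun i _ => ?_
      rw [integral_const_mul, (hint (xs i) (hxs i)).2]
    have hae : ∀ᵐ p ∂ρ, ENNReal.ofReal (g p)
        ≤ ENNReal.ofReal (S.weight p) * ENNReal.ofReal (sSup Tset) := by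
      have hWa : ∀ᵐ p ∂ρ, p.2.1 ∈ S.W := by
        rw [MeasureTheory.ae_iff]
        exact hW0
      filter_upwards [hWa] with p hp
      rw [← ENNReal.ofReal_mul' hK0]
      exact ENNReal.ofReal_le_ofReal (hpoint p hp)
    have h1 : ENNReal.ofReal (∫ p, g p ∂ρ) ≤ ∫⁻ p, ENNReal.ofReal (g p) ∂ρ := by
      have hpos : Integrable (fun p => max (g p) 0) ρ := hgint.pos_part
      calc ENNReal.ofReal (∫ p, g p ∂ρ)
          ≤ ENNReal.ofReal (∫ p, max (g p) 0 ∂ρ) :=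
            ENNReal.ofReal_le_ofReal
              (integral_mono hgint hpos fun p => le_max_left _ _)
        _ = ∫⁻ p, ENNReal.ofReal (max (g p) 0) ∂ρ :=
            ofReal_integral_eq_lintegral_ofReal hpos
              (Filter.Eventually.of_forall fun p => le_max_right _ _)
        _ = ∫⁻ p, ENNReal.ofReal (g p) ∂ρ := by
            simp only [ofReal_max_zero]
    have h2 : (∫⁻ p, ENNReal.ofReal (g p) ∂ρ)
        ≤ ENNReal.ofReal ((Q + ε) * sSup Tset) := by
      calc ∫⁻ p, ENNReal.ofReal (g p) ∂ρ
          ≤ ∫⁻ p, ENNReal.ofReal (S.weight p) * ENNReal.ofReal (sSup Tset) ∂ρ :=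
            lintegral_mono_ae hae
        _ = (∫⁻ p, ENNReal.ofReal (S.weight p) ∂ρ) * ENNReal.ofReal (sSup Tset) :=
            lintegral_mul_const' _ _ ENNReal.ofReal_ne_top
        _ ≤ ENNReal.ofReal (Q + ε) * ENNReal.ofReal (sSup Tset) :=
            mul_le_mul_left hcost.le _
        _ = ENNReal.ofReal ((Q + ε) * sSup Tset) :=
            (ENNReal.ofReal_mul (by linarith)).symm
    rw [hrg]
    have hfin := le_trans h1 h2
    rcases le_or_gt (∫ p, g p ∂ρ) 0 with h | h
    · exact le_trans h (mul_nonneg (by linarith) hK0)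
    · exact (ENNReal.ofReal_le_ofReal_iff (mul_nonneg (by linarith) hK0)).mp hfin
  rcases eq_or_lt_of_le hK0 with hK | hK
  · have h := key 1 one_pos
    rw [← hK] at h ⊢
    simpa using h
  · refine le_of_forall_pos_le_add fun δ hδ => ?_
    calc ∑ i, ξ i * f (xs i)
        ≤ (Q + δ / sSup Tset) * sSup Tset := key _ (div_pos hδ hK)
      _ = Q * sSup Tset + δ := by field_simp
end
end
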